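/- arXiv:1506.00452 — 7 statements merged into one kernel-verified Lean document; each statement's English description precedes it below -/
import Mathlib

section
/- A quadric of PG(2,q) with q even, given by coefficients (a11,a22,a33,a12,a13,a23), is degenerate if and only if a12*a13*a23 + a11*a23^2 + a22*a13^2 + a33*a12^2 = 0. -/
/-- Evaluation of the ternary quadratic form with coefficient vector
`a = (a11,a22,a33,a12,a13,a23)` at `x = (x1,x2,x3)`. -/
def Qeval {F : Type*} [CommRing F] (a : Fin 6 → F) (x : Fin 3 → F) : F :=
  a 0 * x 0 ^ 2 + a 1 * x 1 ^ 2 + a 2 * x 2 ^ 2 +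
    a 3 * x 0 * x 1 + a 4 * x 0 * x 2 + a 5 * x 1 * x 2

/-- A ternary quadratic form over GF(q) is degenerate if it splits into a
product of two linear forms over GF(q^2): it is then a repeated line, a
product of two lines over GF(q), or a product of two conjugate lines
over GF(q^2). -/
def IsDegenerate (F E : Type*) [Field F] [Field E] [Algebra F E]
    (a : Fin 6 → F) : Prop :=
  ∃ u v : Fin 3 → E, ∀ x : Fin 3 → E,
    Qeval (fun i => algebraMap F E (a i)) x =
      (∑ i, u i * x i) * (∑ i, v i * x i)


open Polynomial

section Aux

variable {F E : Type*} [Field F] [Fintype F] [Field E] [Fintype E] [Algebra F E]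

lemma aux_two_eq_zero (q : ℕ) (hq : Fintype.card F = q) (hchar : ringChar F = 2)
    (hE : Fintype.card E = q ^ 2) : (2 : E) = 0 := by
  haveI hF : CharP F 2 := hchar ▸ ringChar.charP F
  obtain ⟨n, -, hcard⟩ := FiniteField.card F 2
  have hcastE : ((q ^ 2 : ℕ) : E) = 0 := by
    rw [← hE]; exact Nat.cast_card_eq_zero E
  have hdvd : ringChar E ∣ q ^ 2 := ringChar.dvd hcastE
  have hprimeE : (ringChar E).Prime := CharP.char_is_prime E (ringChar E)
  have h2dvd : ringChar E ∣ 2 := by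
    have h' : ringChar E ∣ 2 ^ ((n : ℕ) * 2) := by
      rw [hq] at hcard
      rw [hcard, ← pow_mul] at hdvd
      exact hdvd
    exact hprimeE.dvd_of_dvd_pow h'
  have h2 : ringChar E = 2 := (Nat.prime_dvd_prime_iff_eq hprimeE Nat.prime_two).mp h2dvd
  haveI : CharP E 2 := h2 ▸ ringChar.charP E
  exact_mod_cast CharP.cast_eq_zero E 2

lemma exists_root_quadratic (q : ℕ) (hq : Fintype.card F = q) (hE : Fintype.card E = q ^ 2)
    (c3 c1 : F) : ∃ τ : E, τ ^ 2 + algebraMap F E c3 * τ + algebraMap F E c1 = 0 := by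
  set φ := algebraMap F E with hφ
  set f : F[X] := X ^ 2 + C c3 * X + C c1 with hf
  have hmonic : f.Monic := by rw [hf]; monicity!
  have hdeg : f.natDegree = 2 := by rw [hf]; compute_degree!
  by_cases hirr : Irreducible f
  case neg =>
    obtain ⟨d1, d2, hmul, hadd⟩ := (hmonic.not_irreducible_iff_exists_add_mul_eq_coeff hdeg).mp hirr
    have hc1 : c1 = d1 * d2 := by
      rw [← hmul, hf]; simp [coeff_X_pow]
    have hc3 : c3 = d1 + d2 := by
      rw [← hadd, hf]; simp [coeff_X_pow]
    refine ⟨-(φ d1), ?_⟩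
    have hc1E : φ c1 = φ d1 * φ d2 := by rw [hc1, map_mul]
    have hc3E : φ c3 = φ d1 + φ d2 := by rw [hc3, map_add]
    linear_combination (-(φ d1)) * hc3E + hc1E
  case pos =>
    haveI : Fact (Irreducible f) := ⟨hirr⟩
    set K := AdjoinRoot f with hK
    let pb := AdjoinRoot.powerBasis' hmonic
    haveI : Fintype K := Fintype.ofEquiv _ pb.basis.equivFun.toEquiv.symm
    have hcardK : Fintype.card K = q ^ 2 := by
      rw [Module.card_fintype pb.basis, Fintype.card_fin, hq, show pb.dim = 2 from hdeg]
    have hxq : AdjoinRoot.root f ^ q ^ 2 = AdjoinRoot.root f := by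
      have h := FiniteField.pow_card (AdjoinRoot.root f)
      rwa [hcardK] at h
    have hdvd : f ∣ (X ^ q ^ 2 - X : F[X]) := by
      have hmin : minpoly F (AdjoinRoot.root f) = f := by
        rw [AdjoinRoot.minpoly_root hmonic.ne_zero, hmonic.leadingCoeff, inv_one, map_one, mul_one]
      rw [← hmin]
      apply minpoly.dvd
      simp [hxq]
    have hone : 1 < Fintype.card E := Fintype.one_lt_card
    have hne : (X ^ q ^ 2 - X : E[X]) ≠ 0 := by
      have h := FiniteField.X_pow_card_sub_X_ne_zero E hone
      rwa [hE] at h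
    have hsplits : ((X : E[X]) ^ q ^ 2 - X).Splits := by
      rw [splits_iff_card_roots, ← hE, FiniteField.roots_X_pow_card_sub_X,
        FiniteField.X_pow_card_sub_X_natDegree_eq E hone]
      simp
    have hdvdE : f.map φ ∣ (X ^ q ^ 2 - X : E[X]) := by
      have h := Polynomial.map_dvd φ hdvd
      simpa using h
    have hfs : (f.map φ).Splits := hsplits.of_dvd hne hdvdE
    have hdegmap : (f.map φ).degree ≠ 0 := by
      rw [degree_map]
      rw [degree_eq_natDegree hmonic.ne_zero, hdeg]
      decide
    obtain ⟨τ, hτ⟩ := hfs.exists_eval_eq_zero hdegmap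
    refine ⟨τ, ?_⟩
    have h : eval₂ φ τ f = 0 := by
      rwa [Polynomial.eval_map] at hτ
    simpa [hf] using h

end Aux

section Aux2

variable {F E : Type*} [Field F] [Fintype F] [Field E] [Fintype E] [Algebra F E]

lemma quad_factor (h2 : (2 : E) = 0) (q : ℕ) (hq : Fintype.card F = q)
    (hE : Fintype.card E = q ^ 2) (b0 b1 b3 : F) :
    ∃ α β α' β' : E, α * α' = algebraMap F E b0 ∧ β * β' = algebraMap F E b1 ∧
      α * β' + α' * β = algebraMap F E b3 := by
  set φ := algebraMap F E with hφ
  by_cases h0 : b0 = 0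
  · exact ⟨0, 1, φ b3, φ b1, by simp [h0], by simp, by simp⟩
  · obtain ⟨τ, hτ⟩ := exists_root_quadratic q hq hE (b3 / b0) (b1 / b0)
    have h0E : φ b0 ≠ 0 := by
      simpa using (map_ne_zero_iff φ (algebraMap F E).injective).mpr h0
    have h3E : φ (b3 / b0) * φ b0 = φ b3 := by
      rw [← map_mul, div_mul_cancel₀ _ h0]
    have h1E : φ (b1 / b0) * φ b0 = φ b1 := by
      rw [← map_mul, div_mul_cancel₀ _ h0]
    have hτ' : φ b0 * τ ^ 2 + φ b3 * τ + φ b1 = 0 := by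
      linear_combination φ b0 * hτ - τ * h3E - h1E
    refine ⟨φ b0, φ b0 * τ, 1, φ (b3 / b0) + τ, by ring, ?_, ?_⟩
    · linear_combination hτ' + τ * h3E - φ b1 * h2
    · linear_combination h3E + (φ b0 * τ) * h2
end Aux2

section Aux3

variable {F E : Type*} [Field F] [Fintype F] [Field E] [Fintype E] [Algebra F E]

lemma factor_main (h2 : (2 : E) = 0) (q : ℕ) (hq : Fintype.card F = q)
    (hE : Fintype.card E = q ^ 2) (b0 b1 b2 b3 b4 b5 : F) (hb3 : b3 ≠ 0)
    (hΔ : b3 * b4 * b5 + b0 * b5 ^ 2 + b1 * b4 ^ 2 + b2 * b3 ^ 2 = 0) :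
    ∃ u v : Fin 3 → E, ∀ x : Fin 3 → E,
      algebraMap F E b0 * x 0 ^ 2 + algebraMap F E b1 * x 1 ^ 2 + algebraMap F E b2 * x 2 ^ 2 +
        algebraMap F E b3 * x 0 * x 1 + algebraMap F E b4 * x 0 * x 2 +
        algebraMap F E b5 * x 1 * x 2 =
      (∑ i, u i * x i) * (∑ i, v i * x i) := by
  obtain ⟨α, β, α', β', hA, hB, hC⟩ := quad_factor h2 q hq hE b0 b1 b3
  set φ := algebraMap F E with hφ
  have hb3E : φ b3 ≠ 0 := (map_ne_zero_iff φ (algebraMap F E).injective).mpr hb3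
  set γ : E := (φ b4 * β + φ b5 * α) / φ b3 with hγ
  set γ' : E := (φ b4 * β' + φ b5 * α') / φ b3 with hγ'
  have hΔE : φ b3 * φ b4 * φ b5 + φ b0 * φ b5 ^ 2 + φ b1 * φ b4 ^ 2 + φ b2 * φ b3 ^ 2 = 0 := by
    have h := congrArg φ hΔ
    simpa [map_add, map_mul, map_pow] using h
  have hγg : γ * φ b3 = φ b4 * β + φ b5 * α := div_mul_cancel₀ _ hb3E
  have hγ'g : γ' * φ b3 = φ b4 * β' + φ b5 * α' := div_mul_cancel₀ _ hb3E
  have key : (φ b4 * β + φ b5 * α) * (φ b4 * β' + φ b5 * α') = φ b2 * (φ b3 * φ b3) := by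
    linear_combination (φ b4 ^ 2) * hB + (φ b4 * φ b5) * hC + (φ b5 ^ 2) * hA + hΔE -
      (φ b2 * φ b3 ^ 2) * h2
  have hG1 : γ * γ' = φ b2 := by
    apply mul_right_cancel₀ (mul_ne_zero hb3E hb3E)
    calc γ * γ' * (φ b3 * φ b3) = (γ * φ b3) * (γ' * φ b3) := by ring
      _ = φ b2 * (φ b3 * φ b3) := by rw [hγg, hγ'g]; exact key
  have hG2 : α * γ' + α' * γ = φ b4 := by
    apply mul_right_cancel₀ hb3E
    linear_combination α * hγ'g + α' * hγg + φ b4 * hC + (φ b5 * α * α') * h2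
  have hG3 : β * γ' + β' * γ = φ b5 := by
    apply mul_right_cancel₀ hb3E
    linear_combination β * hγ'g + β' * hγg + φ b5 * hC + (φ b4 * β * β') * h2
  refine ⟨![α, β, γ], ![α', β', γ'], fun x => ?_⟩
  simp only [Fin.sum_univ_three, Matrix.cons_val_zero, Matrix.cons_val_one, Matrix.head_cons,
    Matrix.cons_val_two, Matrix.tail_cons]
  linear_combination (-(x 0 ^ 2)) * hA + (-(x 1 ^ 2)) * hB + (-(x 2 ^ 2)) * hG1 +
    (-(x 0 * x 1)) * hC + (-(x 0 * x 2)) * hG2 + (-(x 1 * x 2)) * hG3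

end Aux3

section Aux4

variable {F E : Type*} [Field F] [Fintype F] [Field E] [Fintype E] [Algebra F E]

lemma factor_diag (h2 : (2 : E) = 0) (hchar : ringChar F = 2) (b0 b1 b2 : F) :
    ∃ u v : Fin 3 → E, ∀ x : Fin 3 → E,
      algebraMap F E b0 * x 0 ^ 2 + algebraMap F E b1 * x 1 ^ 2 + algebraMap F E b2 * x 2 ^ 2
        = (∑ i, u i * x i) * (∑ i, v i * x i) := by
  obtain ⟨s0, hs0⟩ := FiniteField.isSquare_of_char_two hchar b0
  obtain ⟨s1, hs1⟩ := FiniteField.isSquare_of_char_two hchar b1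
  obtain ⟨s2, hs2⟩ := FiniteField.isSquare_of_char_two hchar b2
  set φ := algebraMap F E with hφ
  have e0 : φ b0 = φ s0 * φ s0 := by rw [← map_mul, ← hs0]
  have e1 : φ b1 = φ s1 * φ s1 := by rw [← map_mul, ← hs1]
  have e2 : φ b2 = φ s2 * φ s2 := by rw [← map_mul, ← hs2]
  refine ⟨![φ s0, φ s1, φ s2], ![φ s0, φ s1, φ s2], fun x => ?_⟩
  simp only [Fin.sum_univ_three, Matrix.cons_val_zero, Matrix.cons_val_one, Matrix.head_cons,
    Matrix.cons_val_two, Matrix.tail_cons]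
  linear_combination (x 0 ^ 2) * e0 + (x 1 ^ 2) * e1 + (x 2 ^ 2) * e2 -
    (φ s0 * φ s1 * x 0 * x 1 + φ s0 * φ s2 * x 0 * x 2 + φ s1 * φ s2 * x 1 * x 2) * h2

end Aux4

theorem degenerate_iff_even' (F E : Type*) [Field F] [Fintype F] [Field E]
    [Fintype E] [Algebra F E] (q : ℕ) (hq : Fintype.card F = q)
    (hchar : ringChar F = 2) (hE : Fintype.card E = q ^ 2)
    (a : Fin 6 → F) :
    (∃ u v : Fin 3 → E, ∀ x : Fin 3 → E,
      (algebraMap F E (a 0)) * x 0 ^ 2 + (algebraMap F E (a 1)) * x 1 ^ 2 +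
      (algebraMap F E (a 2)) * x 2 ^ 2 + (algebraMap F E (a 3)) * x 0 * x 1 +
      (algebraMap F E (a 4)) * x 0 * x 2 + (algebraMap F E (a 5)) * x 1 * x 2 =
      (∑ i, u i * x i) * (∑ i, v i * x i)) ↔
      a 3 * a 4 * a 5 + a 0 * a 5 ^ 2 + a 1 * a 4 ^ 2 + a 2 * a 3 ^ 2 = 0 := by
  have h2E : (2 : E) = 0 := aux_two_eq_zero q hq hchar hE
  set φ := algebraMap F E with hφ
  constructor
  · rintro ⟨u, v, H⟩
    have h0 := H ![1, 0, 0]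
    have h1 := H ![0, 1, 0]
    have h2' := H ![0, 0, 1]
    have h01 := H ![1, 1, 0]
    have h02 := H ![1, 0, 1]
    have h12 := H ![0, 1, 1]
    simp only [Matrix.cons_val_zero, Matrix.cons_val_one, Matrix.head_cons, Matrix.cons_val_two,
      Matrix.tail_cons, Fin.sum_univ_three, one_pow, mul_one, mul_zero, zero_pow, add_zero,
      zero_add, one_mul, ne_eq, OfNat.ofNat_ne_zero, not_false_eq_true] at h0 h1 h2' h01 h02 h12
    have e0 : φ (a 0) = u 0 * v 0 := by linear_combination h0
    have e1 : φ (a 1) = u 1 * v 1 := by linear_combination h1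
    have e2 : φ (a 2) = u 2 * v 2 := by linear_combination h2'
    have e3 : φ (a 3) = u 0 * v 1 + u 1 * v 0 := by linear_combination h01 - h0 - h1
    have e4 : φ (a 4) = u 0 * v 2 + u 2 * v 0 := by linear_combination h02 - h0 - h2'
    have e5 : φ (a 5) = u 1 * v 2 + u 2 * v 1 := by linear_combination h12 - h1 - h2'
    have key : φ (a 3) * φ (a 4) * φ (a 5) + φ (a 0) * φ (a 5) ^ 2 + φ (a 1) * φ (a 4) ^ 2 +
        φ (a 2) * φ (a 3) ^ 2 = 0 := by
      rw [e0, e1, e2, e3, e4, e5]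
      linear_combination (u 1 * u 2 ^ 2 * v 0 ^ 2 * v 1 + u 1 ^ 2 * u 2 * v 0 ^ 2 * v 2 +
        u 0 * u 2 ^ 2 * v 0 * v 1 ^ 2 + 4 * u 0 * u 1 * u 2 * v 0 * v 1 * v 2 +
        u 0 * u 1 ^ 2 * v 0 * v 2 ^ 2 + u 0 ^ 2 * u 2 * v 1 ^ 2 * v 2 +
        u 0 ^ 2 * u 1 * v 1 * v 2 ^ 2) * h2E
    apply (algebraMap F E).injective
    rw [map_zero]
    rw [map_add, map_add, map_add, map_mul, map_mul, map_mul, map_mul, map_mul, map_pow,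
      map_pow, map_pow]
    exact key
  · intro hΔ
    rcases eq_or_ne (a 3) 0 with h3 | h3
    · rcases eq_or_ne (a 4) 0 with h4 | h4
      · rcases eq_or_ne (a 5) 0 with h5 | h5
        · obtain ⟨u, v, H⟩ := factor_diag h2E hchar (a 0) (a 1) (a 2)
          refine ⟨u, v, fun x => ?_⟩
          have h := H x
          rw [h3, h4, h5]
          simp only [map_zero, zero_mul]
          linear_combination h
        · obtain ⟨u, v, H⟩ := factor_main h2E q hq hE (a 2) (a 1) (a 0) (a 5) (a 4) (a 3) h5
            (by linear_combination hΔ)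
          refine ⟨![u 2, u 1, u 0], ![v 2, v 1, v 0], fun x => ?_⟩
          have h := H ![x 2, x 1, x 0]
          simp only [Matrix.cons_val_zero, Matrix.cons_val_one, Matrix.head_cons,
            Matrix.cons_val_two, Matrix.tail_cons, Fin.sum_univ_three] at h ⊢
          linear_combination h
      · obtain ⟨u, v, H⟩ := factor_main h2E q hq hE (a 0) (a 2) (a 1) (a 4) (a 3) (a 5) h4
          (by linear_combination hΔ)
        refine ⟨![u 0, u 2, u 1], ![v 0, v 2, v 1], fun x => ?_⟩
        have h := H ![x 0, x 2, x 1]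
        simp only [Matrix.cons_val_zero, Matrix.cons_val_one, Matrix.head_cons,
          Matrix.cons_val_two, Matrix.tail_cons, Fin.sum_univ_three] at h ⊢
        linear_combination h
    · obtain ⟨u, v, H⟩ := factor_main h2E q hq hE (a 0) (a 1) (a 2) (a 3) (a 4) (a 5) h3 hΔ
      exact ⟨u, v, H⟩

/-- For `q` even, a quadric of PG(2,q) with coefficients
`(a11,a22,a33,a12,a13,a23)` is degenerate if and only if
`a12*a13*a23 + a11*a23^2 + a22*a13^2 + a33*a12^2 = 0`. -/
theorem degenerate_iff_even (F E : Type*) [Field F] [Fintype F] [Field E]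
    [Fintype E] [Algebra F E] (q : ℕ) (hq : Fintype.card F = q)
    (hchar : ringChar F = 2) (hE : Fintype.card E = q ^ 2)
    (a : Fin 6 → F) (ha : a ≠ 0) :
    IsDegenerate F E a ↔
      a 3 * a 4 * a 5 + a 0 * a 5 ^ 2 + a 1 * a 4 ^ 2 + a 2 * a 3 ^ 2 = 0 := by
  unfold IsDegenerate Qeval
  exact degenerate_iff_even' F E q hq hchar hE a
end

section
/- Let C0 and C_infty be two distinct conics of a circumscribed bundle of PG(2,q) with q odd, and let P be a point of PG(2,q). Then the polar line of P with respect to C0 is different from the polar line of P with respect to C_infty. Equivalently, the projectivity obtained as the product of the two polarities associated with C0 and C_infty is fixed-point free on PG(2,q). -/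
/-- The symmetric matrix associated (for odd characteristic) to the ternary
quadratic form with coefficients `(a11,a22,a33,a12,a13,a23)`. -/
def Msym {F : Type*} [Field F] (a : Fin 6 → F) : Matrix (Fin 3) (Fin 3) F :=
  !![a 0, a 3 / 2, a 4 / 2;
     a 3 / 2, a 1, a 5 / 2;
     a 4 / 2, a 5 / 2, a 2]

/-!
If the polars of `P` with respect to `C₀` and `C∞` coincide, some member `N` of the pencil
spanned by the two conics is singular at `P`. This `N` is defined over `GF(q)`, hence
Frobenius-invariant, and it passes through the vertex `V`, therefore through all three vertices
`V, V^σ, V^σ²`. In the basis given by the triangle its Gram matrix has zero diagonal and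
off-diagonal entries `b, σ b, σ² b`, so its determinant is `2 b (σ b) (σ² b)`. Since `N` is
singular and `q` is odd, `b = 0`, the Gram matrix vanishes, and `N = 0`: the two conics would be
proportional.
-/

open Matrix

theorem Matrix.IsSymm.dotProduct_mulVec_comm {n R : Type*} [Fintype n] [CommSemiring R]
    {M : Matrix n n R} (hM : M.IsSymm) (x y : n → R) : x ⬝ᵥ M *ᵥ y = y ⬝ᵥ M *ᵥ x := by
  rw [dotProduct_mulVec, dotProduct_comm, ← mulVec_transpose, hM.eq]

theorem AlgEquiv.apply_dotProduct_mulVec_map_algebraMap {n F E : Type*} [Fintype n] [Field F]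
    [Field E] [Algebra F E] (σ : E ≃ₐ[F] E) (M : Matrix n n F) (x y : n → E) :
    σ (x ⬝ᵥ M.map (algebraMap F E) *ᵥ y) = (σ ∘ x) ⬝ᵥ M.map (algebraMap F E) *ᵥ (σ ∘ y) := by
  simp only [dotProduct, mulVec, map_apply, map_sum, map_mul, AlgEquiv.commutes,
    Function.comp_apply]

theorem frobenius_cube_apply_eq_self {E : Type*} [Field E] [Fintype E] {q : ℕ}
    (hE : Fintype.card E = q ^ 3) {σ : E → E} (hσ : ∀ x, σ x = x ^ q) (x : E) :
    σ (σ (σ x)) = x := by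
  rw [hσ, hσ, hσ, ← pow_mul, ← pow_mul, show q * (q * q) = Fintype.card E by rw [hE]; ring,
    FiniteField.pow_card]

theorem two_ne_zero_of_odd_card {K : Type*} [Field K] [Fintype K] (h : Odd (Fintype.card K)) :
    (2 : K) ≠ 0 :=
  Ring.two_ne_zero fun hchar => by
    have := FiniteField.even_card_of_char_two hchar
    rw [Nat.odd_iff] at h
    omega

section Msym

variable {F : Type*} [Field F]

theorem Msym_isSymm (a : Fin 6 → F) : (Msym a).IsSymm :=
  IsSymm.ext fun i j => by fin_cases i <;> fin_cases j <;> rfl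

theorem Msym_smul (c : F) (a : Fin 6 → F) : Msym (c • a) = c • Msym a := by
  ext i j
  fin_cases i <;> fin_cases j <;> simp [Msym, mul_div_assoc]

theorem Msym_injective (h2 : (2 : F) ≠ 0) : Function.Injective (Msym (F := F)) := by
  intro a b h
  have hij := fun i j => congrFun (congrFun h i) j
  funext k
  fin_cases k
  · simpa [Msym] using hij 0 0
  · simpa [Msym] using hij 1 1
  · simpa [Msym] using hij 2 2
  · simpa [Msym, h2] using hij 0 1
  · simpa [Msym, h2] using hij 0 2
  · simpa [Msym, h2] using hij 1 2

theorem dotProduct_Msym_mulVec_self (h2 : (2 : F) ≠ 0) (a : Fin 6 → F) (x : Fin 3 → F) :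
    x ⬝ᵥ Msym a *ᵥ x = Qeval a x := by
  simp only [dotProduct, mulVec, Msym, of_apply, cons_val', cons_val_fin_one, Fin.sum_univ_three,
    cons_val_zero, cons_val_one, cons_val, Qeval]
  field_simp
  ring

theorem Msym_map {E : Type*} [Field E] (f : F →+* E) (a : Fin 6 → F) :
    (Msym a).map f = Msym (f ∘ a) := by
  ext i j
  fin_cases i <;> fin_cases j <;> simp [Msym, map_div₀, map_ofNat]

theorem dotProduct_Msym_map_mulVec_self {E : Type*} [Field E] (h2 : (2 : E) ≠ 0)
    (f : F →+* E) (a : Fin 6 → F) (x : Fin 3 → E) :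
    x ⬝ᵥ (Msym a).map f *ᵥ x = Qeval (fun i => f (a i)) x := by
  rw [Msym_map, dotProduct_Msym_mulVec_self h2]
  rfl

end Msym

section Triangle

variable {F E : Type*} [Field F] [Field E] [Algebra F E] (σ : E ≃ₐ[F] E)

theorem gram_frobenius_triangle (hσ3 : ∀ x, σ (σ (σ x)) = x) {M : Matrix (Fin 3) (Fin 3) F}
    (hM : M.IsSymm) {V : Fin 3 → E} (hV : V ⬝ᵥ M.map (algebraMap F E) *ᵥ V = 0) {b : E}
    (hb : V ⬝ᵥ M.map (algebraMap F E) *ᵥ (σ ∘ V) = b) :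
    of ![V, σ ∘ V, σ ∘ σ ∘ V] * M.map (algebraMap F E) * (of ![V, σ ∘ V, σ ∘ σ ∘ V])ᵀ =
      !![0, b, σ (σ b); b, 0, σ b; σ (σ b), σ b, 0] := by
  have hσdot := σ.apply_dotProduct_mulVec_map_algebraMap M
  have hcomm := (hM.map (algebraMap F E)).dotProduct_mulVec_comm
  have hσ3V : σ ∘ σ ∘ σ ∘ V = V := funext fun i => hσ3 (V i)
  have h11 : (σ ∘ V) ⬝ᵥ M.map (algebraMap F E) *ᵥ (σ ∘ V) = 0 := by
    rw [← hσdot, hV, map_zero]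
  have h22 : (σ ∘ σ ∘ V) ⬝ᵥ M.map (algebraMap F E) *ᵥ (σ ∘ σ ∘ V) = 0 := by
    rw [← hσdot, h11, map_zero]
  have h12 : (σ ∘ V) ⬝ᵥ M.map (algebraMap F E) *ᵥ (σ ∘ σ ∘ V) = σ b := by
    rw [← hb, hσdot]
  have h02 : V ⬝ᵥ M.map (algebraMap F E) *ᵥ (σ ∘ σ ∘ V) = σ (σ b) := by
    rw [← hb, hσdot, hσdot, hcomm, hσ3V]
  ext i j
  rw [mul_mul_apply, transpose_transpose]
  fin_cases i <;> fin_cases j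
  exacts [hV, hb, h02, (hcomm _ _).trans hb, h11, h12, (hcomm _ _).trans h02,
    (hcomm _ _).trans h12, h22]

theorem eq_zero_of_det_eq_zero_of_isotropic_triangle (h2 : (2 : E) ≠ 0)
    (hσ3 : ∀ x, σ (σ (σ x)) = x) {M : Matrix (Fin 3) (Fin 3) F} (hM : M.IsSymm)
    (hdet : M.det = 0) {V : Fin 3 → E} (htri : LinearIndependent E ![V, σ ∘ V, σ ∘ σ ∘ V])
    (hV : V ⬝ᵥ M.map (algebraMap F E) *ᵥ V = 0) : M = 0 := by
  set B : Matrix (Fin 3) (Fin 3) E := of ![V, σ ∘ V, σ ∘ σ ∘ V]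
  obtain ⟨b, hb⟩ : ∃ b, V ⬝ᵥ M.map (algebraMap F E) *ᵥ (σ ∘ V) = b := ⟨_, rfl⟩
  have hB : IsUnit B := linearIndependent_rows_iff_isUnit.mp htri
  have hgram := gram_frobenius_triangle σ hσ3 hM hV hb
  have hdet_gram : 2 * (b * σ b * σ (σ b)) = 0 := by
    have := congrArg det hgram
    rw [det_mul, det_mul, ← RingHom.mapMatrix_apply, ← RingHom.map_det, hdet, map_zero, mul_zero,
      zero_mul, det_fin_three] at this
    simp only [of_apply, cons_val', cons_val_zero, cons_val_fin_one, cons_val_one, cons_val,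
      mul_zero, zero_mul, sub_self, zero_add, sub_zero] at this
    linear_combination -this
  have hb0 : b = 0 := by simpa [h2] using hdet_gram
  have hgram0 : B * M.map (algebraMap F E) * Bᵀ = 0 := by
    rw [hgram, hb0]
    ext i j
    fin_cases i <;> fin_cases j <;> simp
  have hBt : IsUnit Bᵀ := (isUnit_transpose B).mpr hB
  rw [hBt.mul_left_eq_zero, hB.mul_right_eq_zero] at hgram0
  exact map_injective (algebraMap F E).injective
    (hgram0.trans (Matrix.map_zero _ (map_zero _)).symm)

end Triangle

theorem eq_smul_of_polar_eq_smul_polar {F E : Type*} [Field F] [Field E] [Algebra F E]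
    (h2 : (2 : E) ≠ 0) (σ : E ≃ₐ[F] E) (hσ3 : ∀ x, σ (σ (σ x)) = x) {V : Fin 3 → E}
    (htri : LinearIndependent E ![V, σ ∘ V, σ ∘ σ ∘ V]) {a b : Fin 6 → F}
    (ha : Qeval (fun i => algebraMap F E (a i)) V = 0)
    (hb : Qeval (fun i => algebraMap F E (b i)) V = 0)
    {P : Fin 3 → F} (hP : P ≠ 0) {c : F} (hc : Msym b *ᵥ P = c • Msym a *ᵥ P) :
    Msym b = c • Msym a := by
  set N := Msym b - c • Msym a
  have hdet : N.det = 0 :=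
    exists_mulVec_eq_zero_iff.mp ⟨P, hP, by rw [sub_mulVec, smul_mulVec, hc, sub_self]⟩
  have hV : V ⬝ᵥ N.map (algebraMap F E) *ᵥ V = 0 := by
    have hmap : N.map (algebraMap F E) =
        (Msym b).map (algebraMap F E) - c • (Msym a).map (algebraMap F E) := by
      ext i j
      simp only [N, map_apply, Matrix.sub_apply, Matrix.smul_apply, smul_eq_mul, map_sub, map_mul]
      rw [Algebra.smul_def]
    rw [hmap, sub_mulVec, smul_mulVec, dotProduct_sub, dotProduct_smul,
      dotProduct_Msym_map_mulVec_self h2, dotProduct_Msym_map_mulVec_self h2, ha, hb, smul_zero,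
      sub_zero]
  exact sub_eq_zero.mp <| eq_zero_of_det_eq_zero_of_isotropic_triangle σ h2 hσ3
    ((Msym_isSymm b).sub ((Msym_isSymm a).smul c)) hdet htri hV

theorem polar_lines_distinct_odd_general (F E : Type*) [Field F] [Fintype F] [Field E]
    [Fintype E] [Algebra F E] (q : ℕ) (hq : Fintype.card F = q) (hodd : Odd q)
    (hE : Fintype.card E = q ^ 3)
    (σ : E ≃ₐ[F] E) (hσ : ∀ x : E, σ x = x ^ q)
    (V : Fin 3 → E)
    (htri : LinearIndependent E ![V, fun i => σ (V i), fun i => σ (σ (V i))])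
    (a0 ainf : Fin 6 → F)
    (h0nd : (Msym a0).det ≠ 0)
    (hdist : ¬ ∃ c : F, ainf = c • a0)
    (h0thru : Qeval (fun i => algebraMap F E (a0 i)) V = 0 ∧
      Qeval (fun i => algebraMap F E (a0 i)) (fun i => σ (V i)) = 0 ∧
      Qeval (fun i => algebraMap F E (a0 i)) (fun i => σ (σ (V i))) = 0)
    (hinfthru : Qeval (fun i => algebraMap F E (ainf i)) V = 0 ∧
      Qeval (fun i => algebraMap F E (ainf i)) (fun i => σ (V i)) = 0 ∧
      Qeval (fun i => algebraMap F E (ainf i)) (fun i => σ (σ (V i))) = 0) :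
    ∀ P : Fin 3 → F, P ≠ 0 →
      (¬ ∃ c : F, (Msym ainf).mulVec P = c • (Msym a0).mulVec P) ∧
      ¬ ∃ c : F, (Msym a0)⁻¹.mulVec ((Msym ainf).mulVec P) = c • P := by
  have h2F : (2 : F) ≠ 0 := two_ne_zero_of_odd_card (hq ▸ hodd)
  have h2E : (2 : E) ≠ 0 := two_ne_zero_of_odd_card (hE ▸ hodd.pow)
  have polar_ne : ∀ P : Fin 3 → F, P ≠ 0 → ∀ c : F, Msym ainf *ᵥ P ≠ c • Msym a0 *ᵥ P :=
    fun P hP c hc => hdist ⟨c, Msym_injective h2F <| by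
      rw [Msym_smul]
      exact eq_smul_of_polar_eq_smul_polar h2E σ (frobenius_cube_apply_eq_self hE hσ) htri
        h0thru.1 hinfthru.1 hP hc⟩
  intro P hP
  refine ⟨fun ⟨c, hc⟩ => polar_ne P hP c hc, fun ⟨c, hc⟩ => polar_ne P hP c ?_⟩
  rw [← mulVec_smul, ← hc, mulVec_mulVec, mul_nonsing_inv _ (isUnit_iff_ne_zero.mpr h0nd),
    one_mulVec]

/-- Let `q` be odd and let `C0`, `C∞` be two distinct conics of a
circumscribed bundle of PG(2,q): both are nondegenerate, and both pass,
over GF(q^3), through the vertices `V, V^σ, V^{σ²}` of a triangle fixed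
(as a set) by the Frobenius collineation `σ : x ↦ x^q`, where the vertex `V`
is not a point of PG(2,q).  Then for every point `P` of PG(2,q) the polar
lines `Msym a0 * P` and `Msym a∞ * P` of `P` with respect to the two conics
are distinct; equivalently, the product of the two polarities is a
fixed-point-free projectivity of PG(2,q). -/
theorem polar_lines_distinct_odd (F E : Type*) [Field F] [Fintype F] [Field E]
    [Fintype E] [Algebra F E] (q : ℕ) (hq : Fintype.card F = q) (hodd : Odd q)
    (hE : Fintype.card E = q ^ 3)
    (σ : E ≃ₐ[F] E) (hσ : ∀ x : E, σ x = x ^ q)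
    (V : Fin 3 → E) (hV : V ≠ 0)
    (htri : LinearIndependent E ![V, fun i => σ (V i), fun i => σ (σ (V i))])
    (hVirr : ¬ ∃ (w : Fin 3 → F) (c : E), c ≠ 0 ∧
      V = c • fun i => algebraMap F E (w i))
    (a0 ainf : Fin 6 → F)
    (h0nd : (Msym a0).det ≠ 0) (hinfnd : (Msym ainf).det ≠ 0)
    (hdist : ¬ ∃ c : F, ainf = c • a0)
    (h0thru : Qeval (fun i => algebraMap F E (a0 i)) V = 0 ∧
      Qeval (fun i => algebraMap F E (a0 i)) (fun i => σ (V i)) = 0 ∧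
      Qeval (fun i => algebraMap F E (a0 i)) (fun i => σ (σ (V i))) = 0)
    (hinfthru : Qeval (fun i => algebraMap F E (ainf i)) V = 0 ∧
      Qeval (fun i => algebraMap F E (ainf i)) (fun i => σ (V i)) = 0 ∧
      Qeval (fun i => algebraMap F E (ainf i)) (fun i => σ (σ (V i))) = 0) :
    ∀ P : Fin 3 → F, P ≠ 0 →
      (¬ ∃ c : F, (Msym ainf).mulVec P = c • (Msym a0).mulVec P) ∧
      ¬ ∃ c : F, (Msym a0)⁻¹.mulVec ((Msym ainf).mulVec P) = c • P :=
  polar_lines_distinct_odd_general F E q hq hodd hE σ hσ V htri a0 ainf h0nd hdist h0thru hinfthru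
end

section
/- Let C0 and C_infty be two distinct conics of a circumscribed bundle of PG(2,q) with q even. Then the nucleus of C0 is different from the nucleus of C_infty. -/
lemma nucleus_struct {F : Type*} [Field F] (h2 : (2:F) = 0) (a : Fin 6 → F)
    (N : Fin 3 → F) (hN : N ≠ 0) (ha : ¬ (a 3 = 0 ∧ a 4 = 0 ∧ a 5 = 0))
    (e1 : a 3 * N 1 + a 4 * N 2 = 0)
    (e2 : a 3 * N 0 + a 5 * N 2 = 0)
    (e3 : a 4 * N 0 + a 5 * N 1 = 0) :
    ∃ t : F, t ≠ 0 ∧ N 0 = t * a 5 ∧ N 1 = t * a 4 ∧ N 2 = t * a 3 := by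
  have key : ∃ t : F, N 0 = t * a 5 ∧ N 1 = t * a 4 ∧ N 2 = t * a 3 := by
    by_cases h3 : a 3 = 0
    · by_cases h4 : a 4 = 0
      · have h5 : a 5 ≠ 0 := fun h5 => ha ⟨h3, h4, h5⟩
        have hN1 : N 1 = 0 := by
          have : a 5 * N 1 = 0 := by linear_combination e3 - N 0 * h4
          rcases mul_eq_zero.mp this with h | h
          · exact absurd h h5
          · exact h
        have hN2 : N 2 = 0 := by
          have : a 5 * N 2 = 0 := by linear_combination e2 - N 0 * h3
          rcases mul_eq_zero.mp this with h | h
          · exact absurd h h5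
          · exact h
        exact ⟨N 0 / a 5, by field_simp, by simp [hN1, h4], by simp [hN2, h3]⟩
      · refine ⟨N 1 / a 4, ?_, by field_simp, ?_⟩
        · field_simp
          linear_combination e3 - N 1 * a 5 * h2
        · field_simp
          linear_combination e1 - N 1 * a 3 * h2
    · refine ⟨N 2 / a 3, ?_, ?_, by field_simp⟩
      · field_simp
        linear_combination e2 - N 2 * a 5 * h2
      · field_simp
        linear_combination e1 - N 2 * a 4 * h2
  obtain ⟨t, h0, h1, h2'⟩ := key
  refine ⟨t, fun ht => hN ?_, h0, h1, h2'⟩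
  subst ht
  funext i
  fin_cases i <;> simp [h0, h1, h2']


/-- The polarized bilinear form of the ternary quadratic form with
coefficients `(a11,a22,a33,a12,a13,a23)`, evaluated at `x`, `y`. -/
def Bpol {F : Type*} [CommRing F] (a : Fin 6 → F) (x y : Fin 3 → F) : F :=
  a 3 * (x 0 * y 1 + x 1 * y 0) + a 4 * (x 0 * y 2 + x 2 * y 0) +
    a 5 * (x 1 * y 2 + x 2 * y 1)

/-- Let `q` be even and let `C0`, `C∞` be two distinct conics of a
circumscribed bundle of PG(2,q): both are nondegenerate (for `q` even this
means `a12*a13*a23 + a11*a23² + a22*a13² + a33*a12² ≠ 0`) and both pass,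
over GF(q^3), through the vertices `V, V^σ, V^{σ²}` of a triangle fixed
(as a set) by the Frobenius collineation `σ : x ↦ x^q`, where the vertex `V`
is not a point of PG(2,q).  For `q` even all tangent lines to a conic pass
through a common point, its nucleus, i.e. a point at which the polarized
bilinear form of the conic vanishes identically.  Then the nuclei `N0` of
`C0` and `N∞` of `C∞` are distinct points of PG(2,q). -/
theorem nuclei_distinct_even (F E : Type*) [Field F] [Fintype F] [Field E]
    [Fintype E] [Algebra F E] (q : ℕ) (hq : Fintype.card F = q)
    (hchar : ringChar F = 2) (hE : Fintype.card E = q ^ 3)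
    (σ : E ≃ₐ[F] E) (hσ : ∀ x : E, σ x = x ^ q)
    (V : Fin 3 → E) (hV : V ≠ 0)
    (htri : LinearIndependent E ![V, fun i => σ (V i), fun i => σ (σ (V i))])
    (hVirr : ¬ ∃ (w : Fin 3 → F) (c : E), c ≠ 0 ∧
      V = c • fun i => algebraMap F E (w i))
    (a0 ainf : Fin 6 → F)
    (h0nd : a0 3 * a0 4 * a0 5 + a0 0 * a0 5 ^ 2 + a0 1 * a0 4 ^ 2 +
      a0 2 * a0 3 ^ 2 ≠ 0)
    (hinfnd : ainf 3 * ainf 4 * ainf 5 + ainf 0 * ainf 5 ^ 2 +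
      ainf 1 * ainf 4 ^ 2 + ainf 2 * ainf 3 ^ 2 ≠ 0)
    (hdist : ¬ ∃ c : F, ainf = c • a0)
    (h0thru : Qeval (fun i => algebraMap F E (a0 i)) V = 0 ∧
      Qeval (fun i => algebraMap F E (a0 i)) (fun i => σ (V i)) = 0 ∧
      Qeval (fun i => algebraMap F E (a0 i)) (fun i => σ (σ (V i))) = 0)
    (hinfthru : Qeval (fun i => algebraMap F E (ainf i)) V = 0 ∧
      Qeval (fun i => algebraMap F E (ainf i)) (fun i => σ (V i)) = 0 ∧
      Qeval (fun i => algebraMap F E (ainf i)) (fun i => σ (σ (V i))) = 0)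
    (N0 Ninf : Fin 3 → F) (hN0 : N0 ≠ 0) (hNinf : Ninf ≠ 0)
    (hnuc0 : ∀ y : Fin 3 → F, Bpol a0 N0 y = 0)
    (hnucinf : ∀ y : Fin 3 → F, Bpol ainf Ninf y = 0) :
    ¬ ∃ c : F, Ninf = c • N0 := by
  rintro ⟨c, hc⟩
  -- characteristic 2
  have h2F : (2 : F) = 0 := by
    haveI : CharP F 2 := ringChar.of_eq hchar
    exact_mod_cast CharP.cast_eq_zero F 2
  have h2E : (2 : E) = 0 := by
    rw [← map_ofNat (algebraMap F E) 2, h2F, map_zero]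
  -- extract nucleus equations
  have nuceq : ∀ (a : Fin 6 → F) (N : Fin 3 → F), (∀ y, Bpol a N y = 0) →
      (a 3 * N 1 + a 4 * N 2 = 0) ∧ (a 3 * N 0 + a 5 * N 2 = 0) ∧
      (a 4 * N 0 + a 5 * N 1 = 0) := by
    intro a N h
    refine ⟨?_, ?_, ?_⟩
    · have h0 := h ![1, 0, 0]
      simp [Bpol, Matrix.cons_val_zero, Matrix.cons_val_one, Matrix.head_cons] at h0
      linear_combination h0
    · have h0 := h ![0, 1, 0]
      simp [Bpol, Matrix.cons_val_zero, Matrix.cons_val_one, Matrix.head_cons] at h0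
      linear_combination h0
    · have h0 := h ![0, 0, 1]
      simp [Bpol, Matrix.cons_val_zero, Matrix.cons_val_one, Matrix.head_cons] at h0
      linear_combination h0
  obtain ⟨e01, e02, e03⟩ := nuceq a0 N0 hnuc0
  obtain ⟨ei1, ei2, ei3⟩ := nuceq ainf Ninf hnucinf
  have ha0 : ¬ (a0 3 = 0 ∧ a0 4 = 0 ∧ a0 5 = 0) := by
    rintro ⟨h3, h4, h5⟩; apply h0nd; rw [h3, h4, h5]; ring
  have hai : ¬ (ainf 3 = 0 ∧ ainf 4 = 0 ∧ ainf 5 = 0) := by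
    rintro ⟨h3, h4, h5⟩; apply hinfnd; rw [h3, h4, h5]; ring
  obtain ⟨t, ht, ht0, ht1, ht2⟩ := nucleus_struct h2F a0 N0 hN0 ha0 e01 e02 e03
  obtain ⟨s, hs, hs0, hs1, hs2⟩ := nucleus_struct h2F ainf Ninf hNinf hai ei1 ei2 ei3
  -- proportionality of the cross coefficients
  set lam : F := c * t / s with hlam
  have hl3 : ainf 3 = lam * a0 3 := by
    have := congr_fun hc 2
    simp only [Pi.smul_apply, smul_eq_mul] at this
    rw [hs2, ht2] at this
    field_simp [hlam]
    linear_combination s⁻¹ * this - ainf 3 * (mul_inv_cancel₀ hs)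
  have hl4 : ainf 4 = lam * a0 4 := by
    have := congr_fun hc 1
    simp only [Pi.smul_apply, smul_eq_mul] at this
    rw [hs1, ht1] at this
    field_simp [hlam]
    linear_combination s⁻¹ * this - ainf 4 * (mul_inv_cancel₀ hs)
  have hl5 : ainf 5 = lam * a0 5 := by
    have := congr_fun hc 0
    simp only [Pi.smul_apply, smul_eq_mul] at this
    rw [hs0, ht0] at this
    field_simp [hlam]
    linear_combination s⁻¹ * this - ainf 5 * (mul_inv_cancel₀ hs)
  -- square roots of the diagonal differences
  obtain ⟨b0, hb0⟩ := FiniteField.isSquare_of_char_two hchar (ainf 0 + lam * a0 0)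
  obtain ⟨b1, hb1⟩ := FiniteField.isSquare_of_char_two hchar (ainf 1 + lam * a0 1)
  obtain ⟨b2, hb2⟩ := FiniteField.isSquare_of_char_two hchar (ainf 2 + lam * a0 2)
  set m : F →+* E := algebraMap F E with hm
  -- the linear form vanishes at each vertex
  have key : ∀ W : Fin 3 → E,
      Qeval (fun i => m (a0 i)) W = 0 → Qeval (fun i => m (ainf i)) W = 0 →
      m b0 * W 0 + m b1 * W 1 + m b2 * W 2 = 0 := by
    intro W hq0 hqi
    have hsq : (m b0 * W 0 + m b1 * W 1 + m b2 * W 2) ^ 2 = 0 := by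
      simp only [Qeval] at hq0 hqi
      have hb0E : m (ainf 0) + m lam * m (a0 0) = m b0 * m b0 := by
        rw [← map_mul, ← map_mul, ← map_add, hb0]
      have hb1E : m (ainf 1) + m lam * m (a0 1) = m b1 * m b1 := by
        rw [← map_mul, ← map_mul, ← map_add, hb1]
      have hb2E : m (ainf 2) + m lam * m (a0 2) = m b2 * m b2 := by
        rw [← map_mul, ← map_mul, ← map_add, hb2]
      have hl3E : m (ainf 3) = m lam * m (a0 3) := by rw [← map_mul, hl3]
      have hl4E : m (ainf 4) = m lam * m (a0 4) := by rw [← map_mul, hl4]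
      have hl5E : m (ainf 5) = m lam * m (a0 5) := by rw [← map_mul, hl5]
      linear_combination hqi + m lam * hq0 - W 0 ^ 2 * hb0E - W 1 ^ 2 * hb1E -
        W 2 ^ 2 * hb2E - W 0 * W 1 * hl3E - W 0 * W 2 * hl4E - W 1 * W 2 * hl5E +
        (m b0 * m b1 * W 0 * W 1 + m b0 * m b2 * W 0 * W 2 +
          m b1 * m b2 * W 1 * W 2 - m lam * (m (a0 3) * W 0 * W 1 +
          m (a0 4) * W 0 * W 2 + m (a0 5) * W 1 * W 2)) * h2E
    exact pow_eq_zero_iff (by norm_num) |>.mp hsq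
  have kV := key V h0thru.1 hinfthru.1
  have kV1 := key _ h0thru.2.1 hinfthru.2.1
  have kV2 := key _ h0thru.2.2 hinfthru.2.2
  -- the linear form as a linear map
  let φ : (Fin 3 → E) →ₗ[E] E :=
    m b0 • LinearMap.proj 0 + m b1 • LinearMap.proj 1 + m b2 • LinearMap.proj 2
  have hφapp : ∀ x : Fin 3 → E, φ x = m b0 * x 0 + m b1 * x 1 + m b2 * x 2 := by
    intro x
    simp [φ, LinearMap.proj_apply, smul_eq_mul]
  have hcard : Fintype.card (Fin 3) = Module.finrank E (Fin 3 → E) := by simp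
  let B := basisOfLinearIndependentOfCardEqFinrank htri hcard
  have hB : ⇑B = ![V, fun i => σ (V i), fun i => σ (σ (V i))] :=
    coe_basisOfLinearIndependentOfCardEqFinrank htri hcard
  have hφ : φ = 0 := by
    apply B.ext
    intro i
    rw [hB]
    fin_cases i
    · rw [show (0 : (Fin 3 → E) →ₗ[E] E) _ = 0 from rfl]
      simp only [Matrix.cons_val_zero]
      rw [hφapp]; exact kV
    · rw [show (0 : (Fin 3 → E) →ₗ[E] E) _ = 0 from rfl]
      simp only [Matrix.cons_val_one, Matrix.head_cons]
      rw [hφapp]; exact kV1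
    · rw [show (0 : (Fin 3 → E) →ₗ[E] E) _ = 0 from rfl]
      simp only [Matrix.cons_val_two, Matrix.tail_cons, Matrix.head_cons]
      rw [hφapp]; exact kV2
  have hbz : ∀ j : Fin 3, ∀ b : F, (φ (Pi.single j 1) = m b) → b = 0 := by
    intro j b hj
    rw [hφ] at hj
    apply (algebraMap F E).injective
    rw [map_zero, ← hj]; rfl
  have hb0z : b0 = 0 := hbz 0 b0 (by rw [hφapp]; simp)
  have hb1z : b1 = 0 := hbz 1 b1 (by rw [hφapp]; simp)
  have hb2z : b2 = 0 := hbz 2 b2 (by rw [hφapp]; simp)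
  apply hdist
  refine ⟨lam, funext fun i => ?_⟩
  have hl0 : ainf 0 = lam * a0 0 := by
    rw [hb0z] at hb0; linear_combination hb0 - a0 0 * lam * h2F
  have hl1 : ainf 1 = lam * a0 1 := by
    rw [hb1z] at hb1; linear_combination hb1 - a0 1 * lam * h2F
  have hl2 : ainf 2 = lam * a0 2 := by
    rw [hb2z] at hb2; linear_combination hb2 - a0 2 * lam * h2F
  fin_cases i <;>
    simp only [Pi.smul_apply, smul_eq_mul] <;>
    first
      | exact hl0 | exact hl1 | exact hl2 | exact hl3 | exact hl4 | exact hl5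
end

section
/- Under the action of PGL(3,q) on PG(2,q^3) (via the embedding of PG(2,q) into PG(2,q^3)), the points of PG(2,q^3) fall into exactly three orbits: the q^2+q+1 points of PG(2,q); the (q^3-q)(q^2+q+1) points lying on an extended line of PG(2,q) but not in PG(2,q); and the remaining q^3(q^2-1)(q-1) points lying on no line of PG(2,q). -/
section

variable (F E : Type*) [Field F] [Field E] [Algebra F E]

/-- A point of PG(2,q^3) (given by a coordinate vector over `E = GF(q^3)`)
is a point of the subplane PG(2,q) if some scalar multiple of its coordinate
vector has all coordinates in `F = GF(q)`. -/
def IsFRational (v : Fin 3 → E) : Prop :=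
  ∃ (w : Fin 3 → F) (c : E), c ≠ 0 ∧ v = c • fun i => algebraMap F E (w i)

/-- A point of PG(2,q^3) lies on an extended line of PG(2,q) if it satisfies
a nonzero linear equation with coefficients in `F = GF(q)`. -/
def OnFLine (v : Fin 3 → E) : Prop :=
  ∃ l : Fin 3 → F, l ≠ 0 ∧ ∑ i, algebraMap F E (l i) * v i = 0

/-- Two points of PG(2,q^3) are in the same PGL(3,q)-orbit: some matrix of
GL(3,q) carries a coordinate vector of the first to a coordinate vector of
the second. -/
def SamePGLOrbit (v v' : Fin 3 → E) : Prop :=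
  ∃ (g : GL (Fin 3) F) (c : Eˣ),
    (fun i => ∑ j, algebraMap F E (g.val i j) * v j) = (c : E) • v'

end


/-!
Identify a coordinate vector `v ∈ E³` with the `F`-linear map `F³ → E`, `w ↦ ∑ wᵢ vᵢ`, whose
image is the `F`-span `⟨v⟩` of the coordinates. A matrix of `GL(3,F)` acts by precomposition with
an automorphism of `F³`, and two linear maps out of a finite-dimensional space differ by such an
automorphism iff they have the same image; scaling by `c ∈ Eˣ` multiplies the image by `c`. Hence
`v` and `v'` are in one orbit iff `⟨v⟩ = c • ⟨v'⟩` for some `c`. In a cubic extension any two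
`F`-subspaces of `E` of equal dimension are `Eˣ`-translates of each other, so the orbit of `v` is
determined by `dim ⟨v⟩ ∈ {1, 2, 3}`: dimension `1` means `v ∈ PG(2,q)`, and dimension `3` means
that the coordinates are `F`-independent, i.e. that `v` is on no line of `PG(2,q)`.

The points of `PG(2,q)` are the image of the injective extension-of-scalars map
`PG(2,q) → PG(2,q³)`; the points on no line correspond to the `(q³-1)(q³-q)(q³-q²)` independent
triples, `q³-1` of them per point; the middle orbit is what remains of the `q⁶+q³+1` points.
-/

section

open Module Submodule Matrix
open scoped Pointwise LinearAlgebra.Projectivization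

theorem LinearMap.exists_linearEquiv_comp_eq_of_range_eq {K V W : Type*} [DivisionRing K]
    [AddCommGroup V] [Module K V] [FiniteDimensional K V] [AddCommGroup W] [Module K W]
    {φ ψ : V →ₗ[K] W} (h : range φ = range ψ) : ∃ e : V ≃ₗ[K] V, ψ ∘ₗ e = φ := by
  obtain ⟨C, hC⟩ := (ker φ).exists_isCompl
  obtain ⟨C', hC'⟩ := (ker ψ).exists_isCompl
  have hker : finrank K (ker φ) = finrank K (ker ψ) := by
    have := φ.finrank_range_add_finrank_ker
    have := ψ.finrank_range_add_finrank_ker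
    rw [h] at *
    omega
  have apply_quotientEquivOfIsCompl {f : V →ₗ[K] W} {D : Submodule K V} (hD : IsCompl (ker f) D)
      (x : V ⧸ ker f) : f (quotientEquivOfIsCompl _ _ hD x) = f.quotKerEquivRange x := by
    conv_rhs => rw [← mk_quotientEquivOfIsCompl_apply hD x]
    rfl
  -- `C ≃ V ⧸ ker φ ≃ range φ = range ψ ≃ V ⧸ ker ψ ≃ C'`, and `ker φ ≃ ker ψ` by dimension
  let eC : C ≃ₗ[K] C' := (quotientEquivOfIsCompl _ _ hC).symm ≪≫ₗ φ.quotKerEquivRange ≪≫ₗ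
    LinearEquiv.ofEq _ _ h ≪≫ₗ ψ.quotKerEquivRange.symm ≪≫ₗ quotientEquivOfIsCompl _ _ hC'
  refine ⟨(prodEquivOfIsCompl _ _ hC).symm ≪≫ₗ
    (LinearEquiv.ofFinrankEq _ _ hker).prodCongr eC ≪≫ₗ prodEquivOfIsCompl _ _ hC', ?_⟩
  refine (ofIsCompl_eq hC (φ := 0) (ψ := φ ∘ₗ C.subtype) ?_ ?_).symm.trans
    (ofIsCompl_eq hC ?_ ?_) <;> intro u
  · simp
  · simp [eC, apply_quotientEquivOfIsCompl]
  · simp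
  · simp

theorem Nat.card_subtype_add_card_and_not_add_card_not {α : Type*} [Finite α] {A B : α → Prop}
    (hAB : ∀ x, A x → B x) :
    Nat.card {x // A x} + Nat.card {x // B x ∧ ¬ A x} + Nat.card {x // ¬ B x} = Nat.card α := by
  classical
  have := Fintype.ofFinite α
  simp only [Nat.card_eq_fintype_card]
  have hdisj : Disjoint A (fun x => B x ∧ ¬ A x) := fun r hrA hrB x hx => (hrB x hx).2 (hrA x hx)
  rw [← Fintype.card_subtype_or_disjoint _ _ hdisj, Fintype.card_subtype_compl,
    Fintype.card_congr (Equiv.subtypeEquivRight fun x => (by grind : A x ∨ B x ∧ ¬ A x ↔ B x))]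
  have := Fintype.card_subtype_le B
  omega

namespace Projectivization

variable {K V : Type*} [Field K] [AddCommGroup V] [Module K V] {P : V → Prop}

theorem rep_mk_iff (hP : ∀ (c : Kˣ) (v : V), P (c • v) ↔ P v) (v : V) (hv : v ≠ 0) :
    P (mk K v hv).rep ↔ P v := by
  obtain ⟨c, hc⟩ := (mk_eq_mk_iff K _ v _ hv).mp (mk_rep (mk K v hv))
  rw [← hc, hP]

theorem exists_mk_eq_and_iff (hP : ∀ (c : Kˣ) (v : V), P (c • v) ↔ P v) (p : ℙ K V) :
    (∃ (v : V) (hv : v ≠ 0), p = mk K v hv ∧ P v) ↔ P p.rep := by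
  constructor
  · rintro ⟨v, hv, rfl, h⟩
    exact (rep_mk_iff hP v hv).mpr h
  · exact fun h => ⟨p.rep, p.rep_nonzero, (mk_rep p).symm, h⟩

theorem card_subtype_rep_mul (hP : ∀ (c : Kˣ) (v : V), P (c • v) ↔ P v) :
    Nat.card {p : ℙ K V // P p.rep} * (Nat.card K - 1) = Nat.card {v : V // v ≠ 0 ∧ P v} := by
  rw [← Nat.card_units, ← Nat.card_prod]
  exact Nat.card_congr <| Equiv.prodSubtypeFstEquivSubtypeProd.symm.trans <|
    ((nonZeroEquivProjectivizationProdUnits K V).subtypeEquiv fun v =>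
      (rep_mk_iff hP v.1 v.2).symm).symm.trans (Equiv.subtypeSubtypeEquivSubtypeInter _ _)

end Projectivization

variable {F E : Type*} [Field F] [Field E] [Algebra F E]

theorem Submodule.finrank_units_smul (c : Eˣ) (U : Submodule F E) :
    finrank F (c • U : Submodule F E) = finrank F U :=
  (DistribMulAction.toLinearEquiv F E c).finrank_map_eq U

theorem Submodule.units_smul_le_iff {c : Eˣ} {U U' : Submodule F E} :
    c • U' ≤ U ↔ ∀ x ∈ U', (c : E) * x ∈ U := by
  refine ⟨fun h x hx => h (smul_mem_pointwise_smul x c U' hx), ?_⟩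
  rintro h _ ⟨x, hx, rfl⟩
  exact h x hx

theorem Submodule.mem_inv_units_smul_iff {c : Eˣ} {U : Submodule F E} {x : E} :
    x ∈ c⁻¹ • U ↔ (c : E) * x ∈ U := by
  refine (mem_smul_pointwise_iff_exists x c⁻¹ U).trans ⟨?_, fun h => ⟨c * x, h, ?_⟩⟩
  · rintro ⟨y, hy, rfl⟩
    simpa [Units.smul_def] using hy
  · simp [Units.smul_def]

theorem exists_units_smul_le_of_finrank_eq_one {U U' : Submodule F E}
    (hU : finrank F U = 1) (hU' : finrank F U' = 1) : ∃ c : Eˣ, c • U' ≤ U := by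
  obtain ⟨⟨a, ha⟩, ha0, -⟩ := finrank_eq_one_iff'.mp hU
  obtain ⟨⟨a', ha'⟩, ha'0, hgen⟩ := finrank_eq_one_iff'.mp hU'
  replace ha0 : a ≠ 0 := fun h => ha0 (Subtype.ext h)
  replace ha'0 : a' ≠ 0 := fun h => ha'0 (Subtype.ext h)
  refine ⟨Units.mk0 (a * a'⁻¹) (by simp [ha0, ha'0]), units_smul_le_iff.mpr fun x hx => ?_⟩
  obtain ⟨r, rfl⟩ : ∃ r : F, r • a' = x := (hgen ⟨x, hx⟩).imp fun r hr => congrArg Subtype.val hr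
  rw [Units.val_mk0, mul_smul_comm, mul_assoc, inv_mul_cancel₀ ha'0, mul_one]
  exact U.smul_mem r ha

theorem exists_units_smul_le_of_finrank_eq_two (h3 : finrank F E = 3) {U U' : Submodule F E}
    (hU : finrank F U = 2) (hU' : finrank F U' = 2) : ∃ c : Eˣ, c • U' ≤ U := by
  have : FiniteDimensional F E := .of_finrank_pos (by omega)
  let b := Module.finBasisOfFinrankEq F U' hU'
  let u (i : Fin 2) : Eˣ := Units.mk0 (b i) fun h => b.ne_zero i (Subtype.ext h)
  -- the admissible `c` form the meet of two planes of the 3-space `E`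
  have hT : (u 0)⁻¹ • U ⊓ (u 1)⁻¹ • U ≠ ⊥ := by
    intro h
    have hsum := finrank_sup_add_finrank_inf_eq ((u 0)⁻¹ • U) ((u 1)⁻¹ • U)
    have hle := Submodule.finrank_le ((u 0)⁻¹ • U ⊔ (u 1)⁻¹ • U)
    rw [h, finrank_bot, finrank_units_smul, finrank_units_smul, hU] at hsum
    omega
  obtain ⟨c, hc, hc0⟩ := exists_mem_ne_zero_of_ne_bot hT
  refine ⟨Units.mk0 c hc0, units_smul_le_iff.mpr fun x hx => ?_⟩
  have hcb (i : Fin 2) : c * b i ∈ U := by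
    rw [mul_comm]
    fin_cases i
    exacts [mem_inv_units_smul_iff.mp (mem_inf.mp hc).1,
      mem_inv_units_smul_iff.mp (mem_inf.mp hc).2]
  have hx := congrArg Subtype.val (b.sum_repr ⟨x, hx⟩)
  simp only [coe_sum, coe_smul] at hx
  rw [Units.val_mk0, ← hx, Finset.mul_sum]
  refine sum_mem fun i _ => ?_
  rw [mul_smul_comm]
  exact U.smul_mem _ (hcb i)

theorem exists_units_smul_eq_of_finrank_eq (h3 : finrank F E = 3) {U U' : Submodule F E}
    (h : finrank F U = finrank F U') : ∃ c : Eˣ, U = c • U' := by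
  have : FiniteDimensional F E := .of_finrank_pos (by omega)
  suffices ∃ c : Eˣ, c • U' ≤ U from this.imp fun c hc =>
    (eq_of_le_of_finrank_eq hc (by rw [finrank_units_smul, h])).symm
  have hle := h3 ▸ U'.finrank_le
  interval_cases hd : finrank F U'
  · exact ⟨1, by simp [finrank_eq_zero.mp hd]⟩
  · exact exists_units_smul_le_of_finrank_eq_one h hd
  · exact exists_units_smul_le_of_finrank_eq_two h3 h hd
  · exact ⟨1, by simp [eq_top_of_finrank_eq (h.trans h3.symm)]⟩

theorem span_range_map_mulVec_le {ι κ : Type*} [Fintype ι] (M : Matrix κ ι F) (v : ι → E) :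
    span F (Set.range (M.map (algebraMap F E) *ᵥ v)) ≤ span F (Set.range v) := by
  rw [span_le]
  rintro _ ⟨i, rfl⟩
  refine sum_mem fun j _ => ?_
  change algebraMap F E (M i j) * v j ∈ _
  rw [← Algebra.smul_def]
  exact smul_mem _ _ (subset_span ⟨j, rfl⟩)

theorem span_range_map_mulVec_of_GL {ι : Type*} [Fintype ι] [DecidableEq ι] (g : GL ι F)
    (v : ι → E) :
    span F (Set.range (g.val.map (algebraMap F E) *ᵥ v)) = span F (Set.range v) := by
  refine le_antisymm (span_range_map_mulVec_le _ v) ?_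
  calc span F (Set.range v)
      = span F (Set.range (g.val⁻¹.map (algebraMap F E) *ᵥ (g.val.map (algebraMap F E) *ᵥ v))) := by
        rw [mulVec_mulVec, GeneralLinearGroup.coe_map_inv_mul_map, one_mulVec]
    _ ≤ _ := span_range_map_mulVec_le _ _

theorem exists_GL_map_mulVec_eq_of_span_eq {ι : Type*} [Fintype ι] [DecidableEq ι] {v v' : ι → E}
    (h : span F (Set.range v) = span F (Set.range v')) :
    ∃ g : GL ι F, g.val.map (algebraMap F E) *ᵥ v = v' := by
  rw [← Fintype.range_linearCombination, ← Fintype.range_linearCombination] at h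
  obtain ⟨e, he⟩ := LinearMap.exists_linearEquiv_comp_eq_of_range_eq h.symm
  have hdet : IsUnit (LinearMap.toMatrix' e.toLinearMap)ᵀ.det := by
    rw [det_transpose, LinearMap.det_toMatrix']
    exact e.isUnit_det'
  refine ⟨GeneralLinearGroup.mk'' _ hdet, funext fun i => ?_⟩
  simpa [mulVec, dotProduct, Fintype.linearCombination_apply, Algebra.smul_def,
    LinearMap.toMatrix'_apply, Pi.single_apply] using congr($he (Pi.single i 1))

theorem span_range_units_smul {ι : Type*} (c : Eˣ) (v : ι → E) :
    span F (Set.range ((c : E) • v)) = c • span F (Set.range v) := by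
  have := span_smul (R := F) c (Set.range v)
  rwa [Set.smul_set_range] at this

theorem samePGLOrbit_iff_exists_span_eq {v v' : Fin 3 → E} :
    SamePGLOrbit F E v v' ↔ ∃ c : Eˣ, span F (Set.range v) = c • span F (Set.range v') := by
  constructor
  · rintro ⟨g, c, h⟩
    refine ⟨c, ?_⟩
    rw [← span_range_map_mulVec_of_GL g v, ← span_range_units_smul]
    exact congrArg (fun w => span F (Set.range w)) h
  · rintro ⟨c, hc⟩
    rw [← span_range_units_smul] at hc
    obtain ⟨g, hg⟩ := exists_GL_map_mulVec_eq_of_span_eq hc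
    exact ⟨g, c, hg⟩

theorem finrank_span_range_pos {ι : Type*} [Finite ι] {v : ι → E} (hv : v ≠ 0) :
    0 < finrank F (span F (Set.range v)) := by
  have := FiniteDimensional.span_of_finite F (Set.finite_range v)
  rw [Nat.pos_iff_ne_zero, Ne, Submodule.finrank_eq_zero, span_eq_bot, Set.forall_mem_range]
  exact fun h => hv (funext h)

theorem finrank_span_range_le_three (v : Fin 3 → E) :
    finrank F (span F (Set.range v)) ≤ 3 :=
  (finrank_range_le_card v).trans_eq (Fintype.card_fin 3)

theorem isFRational_iff_finrank_span_eq_one {v : Fin 3 → E} (hv : v ≠ 0) :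
    IsFRational F E v ↔ finrank F (span F (Set.range v)) = 1 := by
  constructor
  · rintro ⟨w, c, hc, rfl⟩
    refine le_antisymm ?_ (finrank_span_range_pos hv)
    have hle : span F (Set.range (c • fun i => algebraMap F E (w i))) ≤ F ∙ c := by
      rw [span_le]
      rintro _ ⟨i, rfl⟩
      exact mem_span_singleton.mpr ⟨w i, by simp [Algebra.smul_def, mul_comm]⟩
    exact (finrank_mono hle).trans (finrank_span_singleton hc).le
  · intro h
    obtain ⟨⟨a, ha⟩, ha0, hgen⟩ := finrank_eq_one_iff'.mp h
    choose w hw using fun i => hgen ⟨v i, subset_span ⟨i, rfl⟩⟩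
    refine ⟨w, a, fun h => ha0 (Subtype.ext h), funext fun i => ?_⟩
    simpa [Algebra.smul_def, mul_comm] using (congrArg Subtype.val (hw i)).symm

theorem onFLine_iff_not_linearIndependent (v : Fin 3 → E) :
    OnFLine F E v ↔ ¬ LinearIndependent F v := by
  simp only [OnFLine, Fintype.linearIndependent_iff, Algebra.smul_def, not_forall, Ne,
    funext_iff, Pi.zero_apply]
  exact ⟨fun ⟨l, hl, hsum⟩ => ⟨l, hsum, hl⟩, fun ⟨l, hsum, hl⟩ => ⟨l, hl, hsum⟩⟩

theorem onFLine_iff_finrank_span_lt (v : Fin 3 → E) :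
    OnFLine F E v ↔ finrank F (span F (Set.range v)) < 3 := by
  have := finrank_span_range_le_three (F := F) v
  rw [onFLine_iff_not_linearIndependent, linearIndependent_iff_card_eq_finrank_span,
    Fintype.card_fin, Set.finrank]
  omega

theorem samePGLOrbit_iff_finrank_span_eq (h3 : finrank F E = 3) {v v' : Fin 3 → E} :
    SamePGLOrbit F E v v' ↔
      finrank F (span F (Set.range v)) = finrank F (span F (Set.range v')) := by
  rw [samePGLOrbit_iff_exists_span_eq]
  constructor
  · rintro ⟨c, hc⟩
    rw [hc, finrank_units_smul]
  · exact exists_units_smul_eq_of_finrank_eq h3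

theorem samePGLOrbit_iff (h3 : finrank F E = 3) {v v' : Fin 3 → E} (hv : v ≠ 0) (hv' : v' ≠ 0) :
    SamePGLOrbit F E v v' ↔
      ((IsFRational F E v ↔ IsFRational F E v') ∧ (OnFLine F E v ↔ OnFLine F E v')) := by
  rw [samePGLOrbit_iff_finrank_span_eq h3, isFRational_iff_finrank_span_eq_one hv,
    isFRational_iff_finrank_span_eq_one hv', onFLine_iff_finrank_span_lt,
    onFLine_iff_finrank_span_lt]
  have := finrank_span_range_pos (F := F) hv
  have := finrank_span_range_pos (F := F) hv'
  have := finrank_span_range_le_three (F := F) v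
  have := finrank_span_range_le_three (F := F) v'
  omega

theorem isFRational_units_smul_iff (c : Eˣ) (v : Fin 3 → E) :
    IsFRational F E (c • v) ↔ IsFRational F E v := by
  constructor
  · rintro ⟨w, d, hd, h⟩
    refine ⟨w, c⁻¹ * d, by simp [hd], ?_⟩
    rw [mul_smul, ← h, Units.smul_def, smul_smul, Units.inv_mul, one_smul]
  · rintro ⟨w, d, hd, rfl⟩
    exact ⟨w, c * d, by simp [hd], by rw [Units.smul_def, smul_smul]⟩

theorem onFLine_units_smul_iff (c : Eˣ) (v : Fin 3 → E) :
    OnFLine F E (c • v) ↔ OnFLine F E v := by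
  rw [onFLine_iff_finrank_span_lt, onFLine_iff_finrank_span_lt, Units.smul_def,
    span_range_units_smul, finrank_units_smul]

theorem IsFRational.onFLine {v : Fin 3 → E} (h : IsFRational F E v) : OnFLine F E v := by
  by_cases hv : v = 0
  · exact ⟨Pi.single 0 1, by simp, by simp [hv]⟩
  · rw [onFLine_iff_finrank_span_lt, (isFRational_iff_finrank_span_eq_one hv).mp h]
    norm_num

theorem exists_smul_eq_of_smul_algebraMap_eq {ι : Type*} {w w' : ι → F} (hw' : w' ≠ 0) {a : E}
    (h : a • (fun i => algebraMap F E (w' i)) = fun i => algebraMap F E (w i)) :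
    ∃ r : F, r • w' = w := by
  obtain ⟨i, hi⟩ := Function.ne_iff.mp hw'
  have ha : a = algebraMap F E (w i / w' i) := by
    rw [map_div₀, eq_div_iff (by simpa using hi)]
    exact congrFun h i
  refine ⟨w i / w' i, funext fun j => (algebraMap F E).injective ?_⟩
  simpa [ha] using congrFun h j

theorem card_isFRational_rep :
    Nat.card {p : ℙ E (Fin 3 → E) // IsFRational F E p.rep} = Nat.card (ℙ F (Fin 3 → F)) := by
  let ι : (Fin 3 → F) →ₛₗ[algebraMap F E] (Fin 3 → E) :=
    { toFun w i := algebraMap F E (w i)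
      map_add' _ _ := by ext; simp
      map_smul' _ _ := by ext; simp }
  have hι : Function.Injective ι := fun w w' h =>
    funext fun i => (algebraMap F E).injective (congrFun h i)
  have hinj : Function.Injective (Projectivization.map ι hι) := by
    refine Projectivization.ind fun w hw => Projectivization.ind fun w' hw' h => ?_
    rw [Projectivization.map_mk, Projectivization.map_mk, Projectivization.mk_eq_mk_iff'] at h
    obtain ⟨a, ha⟩ := h
    obtain ⟨r, hr⟩ := exists_smul_eq_of_smul_algebraMap_eq hw' ha
    exact (Projectivization.mk_eq_mk_iff' F _ _ hw hw').mpr ⟨r, hr⟩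
  have hrange : Set.range (Projectivization.map ι hι) = {p | IsFRational F E p.rep} := by
    ext p
    induction p using Projectivization.ind with | h v hv => ?_
    change _ ↔ IsFRational F E _
    rw [Projectivization.rep_mk_iff (P := IsFRational F E) isFRational_units_smul_iff]
    constructor
    · rintro ⟨ℓ, hℓ⟩
      induction ℓ using Projectivization.ind with | h w hw => ?_
      rw [Projectivization.map_mk, eq_comm, Projectivization.mk_eq_mk_iff] at hℓ
      obtain ⟨a, rfl⟩ := hℓ
      exact ⟨w, a, a.ne_zero, rfl⟩
    · rintro ⟨w, c, hc, rfl⟩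
      have hw : w ≠ 0 := by rintro rfl; exact hv (by ext; simp)
      refine ⟨Projectivization.mk F w hw, ?_⟩
      rw [Projectivization.map_mk, Projectivization.mk_eq_mk_iff']
      exact ⟨c⁻¹, by rw [smul_smul, inv_mul_cancel₀ hc, one_smul]; rfl⟩
  rw [← Nat.card_range_of_injective hinj, hrange]
  rfl

variable [Fintype F] {q : ℕ}

theorem finrank_eq_three_of_card [Fintype E] (hq : Fintype.card F = q)
    (hE : Fintype.card E = q ^ 3) : finrank F E = 3 := by
  have hq2 : 2 ≤ q := hq ▸ Fintype.one_lt_card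
  have := (Module.card_eq_pow_finrank (K := F) (V := E)).symm
  rw [hq, hE] at this
  exact Nat.pow_right_injective hq2 this

theorem card_isFRational_points (hq : Fintype.card F = q) :
    Nat.card {p : ℙ E (Fin 3 → E) // IsFRational F E p.rep} = q ^ 2 + q + 1 := by
  rw [card_isFRational_rep, Projectivization.card_of_finrank F _ (finrank_fin_fun F),
    Nat.card_eq_fintype_card, hq]
  simp only [Finset.sum_range_succ, Finset.sum_range_zero]
  ring

theorem card_not_onFLine_points [Fintype E] (hq : Fintype.card F = q)
    (hE : Fintype.card E = q ^ 3) :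
    Nat.card {p : ℙ E (Fin 3 → E) // ¬ OnFLine F E p.rep} = q ^ 3 * (q ^ 2 - 1) * (q - 1) := by
  have h3 := finrank_eq_three_of_card hq hE
  have hcount := Projectivization.card_subtype_rep_mul (P := fun v : Fin 3 → E => ¬ OnFLine F E v)
    fun c v => not_congr (onFLine_units_smul_iff c v)
  have hLI : {v : Fin 3 → E // v ≠ 0 ∧ ¬ OnFLine F E v} ≃ {v // LinearIndependent F v} :=
    Equiv.subtypeEquivRight fun v => by
      rw [onFLine_iff_not_linearIndependent, not_not, and_iff_right_iff_imp]
      exact fun h hv => h.ne_zero 0 (by rw [hv]; rfl)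
  rw [Nat.card_congr hLI, card_linearIndependent h3.ge, Fin.prod_univ_three, h3, hq,
    Nat.card_eq_fintype_card (α := E), hE] at hcount
  simp only [Fin.val_zero, Fin.val_one, Fin.val_two, pow_zero, pow_one] at hcount
  have hq1 : 1 ≤ q := hq ▸ Fintype.card_pos
  have h1 : 1 ≤ q ^ 2 := Nat.one_le_pow _ _ hq1
  have h2 : q ≤ q ^ 3 := Nat.le_self_pow (by norm_num) q
  have h3' : q ^ 2 ≤ q ^ 3 := Nat.pow_le_pow_right hq1 (by norm_num)
  have h4 : 1 < q ^ 3 := Nat.one_lt_pow (by norm_num) (hq ▸ Fintype.one_lt_card)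
  refine Nat.eq_of_mul_eq_mul_right (by omega : 0 < q ^ 3 - 1) (hcount.trans ?_)
  zify [hq1, h1, h2, h3', h4.le]
  ring

theorem card_onFLine_not_isFRational_points [Fintype E] (hq : Fintype.card F = q)
    (hE : Fintype.card E = q ^ 3) :
    Nat.card {p : ℙ E (Fin 3 → E) // OnFLine F E p.rep ∧ ¬ IsFRational F E p.rep} =
      (q ^ 3 - q) * (q ^ 2 + q + 1) := by
  have hpart := Nat.card_subtype_add_card_and_not_add_card_not
    (A := fun p : ℙ E (Fin 3 → E) => IsFRational F E p.rep) fun p => IsFRational.onFLine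
  rw [card_isFRational_points hq, card_not_onFLine_points hq hE,
    Projectivization.card_of_finrank E _ (finrank_fin_fun E), Nat.card_eq_fintype_card (α := E),
    hE] at hpart
  simp only [Finset.sum_range_succ, Finset.sum_range_zero] at hpart
  have hq1 : 1 ≤ q := hq ▸ Fintype.card_pos
  have h1 : 1 ≤ q ^ 2 := Nat.one_le_pow _ _ hq1
  have h2 : q ≤ q ^ 3 := Nat.le_self_pow (by norm_num) q
  zify [hq1, h1, h2] at hpart ⊢
  linear_combination hpart

end

/-- Under the action of PGL(3,q) on PG(2,q^3) the points fall into exactly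
three orbits: the `q^2+q+1` points of PG(2,q); the `(q^3-q)(q^2+q+1)` points
on an extended line of PG(2,q) but not in PG(2,q); and the remaining
`q^3(q^2-1)(q-1)` points on no line of PG(2,q). -/
theorem pgl_orbits_on_cubic_extension (F E : Type*) [Field F] [Fintype F]
    [Field E] [Fintype E] [Algebra F E] (q : ℕ) (hq : Fintype.card F = q)
    (hE : Fintype.card E = q ^ 3) :
    (∀ (v v' : Fin 3 → E), v ≠ 0 → v' ≠ 0 →
      (SamePGLOrbit F E v v' ↔
        ((IsFRational F E v ↔ IsFRational F E v') ∧
          (OnFLine F E v ↔ OnFLine F E v')))) ∧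
    Nat.card {p : Projectivization E (Fin 3 → E) //
        ∃ (v : Fin 3 → E) (hv : v ≠ 0), p = Projectivization.mk E v hv ∧
          IsFRational F E v} = q ^ 2 + q + 1 ∧
    Nat.card {p : Projectivization E (Fin 3 → E) //
        ∃ (v : Fin 3 → E) (hv : v ≠ 0), p = Projectivization.mk E v hv ∧
          OnFLine F E v ∧ ¬ IsFRational F E v} = (q ^ 3 - q) * (q ^ 2 + q + 1) ∧
    Nat.card {p : Projectivization E (Fin 3 → E) //
        ∃ (v : Fin 3 → E) (hv : v ≠ 0), p = Projectivization.mk E v hv ∧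
          ¬ OnFLine F E v} = q ^ 3 * (q ^ 2 - 1) * (q - 1) := by
  have hR := Projectivization.exists_mk_eq_and_iff (P := IsFRational F E)
    isFRational_units_smul_iff
  have hM := Projectivization.exists_mk_eq_and_iff
    (P := fun v => OnFLine F E v ∧ ¬ IsFRational F E v) fun c v => and_congr (onFLine_units_smul_iff c v) (not_congr (isFRational_units_smul_iff c v))
  have hN := Projectivization.exists_mk_eq_and_iff (P := fun v => ¬ OnFLine F E v)
    fun c v => not_congr (onFLine_units_smul_iff c v)
  rw [Nat.card_congr (Equiv.subtypeEquivRight hR), Nat.card_congr (Equiv.subtypeEquivRight hM),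
    Nat.card_congr (Equiv.subtypeEquivRight hN)]
  exact ⟨fun v v' hv hv' => samePGLOrbit_iff (finrank_eq_three_of_card hq hE) hv hv',
    card_isFRational_points hq, card_onFLine_not_isFRational_points hq hE,
    card_not_onFLine_points hq hE⟩
end

section
/- Fix two conjugate points P1 = (1:alpha:0) and P2 = (1:alpha^q:0) of PG(2,q^2) \ PG(2,q), where alpha is a primitive element of GF(q^2) over GF(q). The quadrics of PG(2,q) whose extensions pass through P1 and P2 are those with a11 = alpha^{q+1} * a22 and a12 = -(alpha + alpha^q) * a22, and they form a web. The degenerate quadrics in this web consist of an elliptic quadric Q' (with q^2+1 points, no three collinear) together with a plane tangent to Q' at the point (0:0:1:0:0:0). -/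
/-- The conditions `a11 = α^{q+1} a22` and `a12 = -(α+α^q) a22` cutting out
the web of quadrics of PG(2,q) through the conjugate points `(1:α:0)` and
`(1:α^q:0)` of PG(2,q^2). -/
def WebC (F : Type*) {E : Type*} [Field F] [Field E] [Algebra F E] (q : ℕ)
    (α : E) (a : Fin 6 → F) : Prop :=
  algebraMap F E (a 0) = α ^ (q + 1) * algebraMap F E (a 1) ∧
    algebraMap F E (a 3) = -(α + α ^ q) * algebraMap F E (a 1)

/-! ### Auxiliary definitions and lemmas -/

def FWeb {F : Type*} [Field F] (t' n' : F) (a : Fin 6 → F) : Prop :=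
  a 0 = n' * a 1 ∧ a 3 = -(t' * a 1)

def Phi {F : Type*} [Field F] (t' n' : F) (a : Fin 6 → F) : F :=
  a 1 * a 2 * (t' ^ 2 - 4 * n') + (a 4 ^ 2 + t' * (a 4 * a 5) + n' * a 5 ^ 2)

def Bf {F : Type*} [Field F] (t' n' : F) (x y : Fin 6 → F) : F :=
  (t' ^ 2 - 4 * n') * (x 1 * y 2 + x 2 * y 1) +
    (2 * (x 4 * y 4) + t' * (x 4 * y 5 + x 5 * y 4) + 2 * (n' * (x 5 * y 5)))

open Polynomial in
lemma fixedfield {F E : Type*} [Field F] [Fintype F] [Field E] [Fintype E] [Algebra F E]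
    {q : ℕ} (hq : Fintype.card F = q) (x : E) (hx : x ^ q = x) :
    x ∈ Set.range (algebraMap F E) := by
  classical
  by_contra hmem
  have hq2 : 2 ≤ q := hq ▸ Fintype.one_lt_card
  set p : E[X] := X ^ q - X with hp
  have hdeg : p.natDegree = q := by
    rw [hp, natDegree_sub_eq_left_of_natDegree_lt (by simp; omega), natDegree_X_pow]
  have hp0 : p ≠ 0 := fun h => by simp [h] at hdeg; omega
  have hsub : insert x ((Finset.univ : Finset F).image (algebraMap F E)) ⊆ p.roots.toFinset := by
    intro y hy
    rw [Multiset.mem_toFinset, mem_roots hp0]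
    rcases Finset.mem_insert.1 hy with rfl | hy
    · simp [p, IsRoot, sub_eq_zero, hx]
    · obtain ⟨z, -, rfl⟩ := Finset.mem_image.1 hy
      simp [p, IsRoot, sub_eq_zero, ← map_pow, ← hq, FiniteField.pow_card]
  have hcard : q + 1 ≤ (p.roots.toFinset).card := by
    have h1 : ((Finset.univ : Finset F).image (algebraMap F E)).card = q := by
      rw [Finset.card_image_of_injective _ (algebraMap F E).injective, Finset.card_univ, hq]
    have h2 : x ∉ (Finset.univ : Finset F).image (algebraMap F E) := by
      intro h; obtain ⟨z, -, rfl⟩ := Finset.mem_image.1 h; exact hmem ⟨z, rfl⟩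
    calc q + 1 = (insert x ((Finset.univ : Finset F).image (algebraMap F E))).card := by
          rw [Finset.card_insert_of_notMem h2, h1]
      _ ≤ (p.roots.toFinset).card := Finset.card_le_card hsub
  have := (Multiset.toFinset_card_le p.roots).trans (p.card_roots'.trans_eq hdeg)
  omega

lemma aniso {F E : Type*} [Field F] [Field E] [Algebra F E]
    {q : ℕ} {α : E} {t' n' : F}
    (ht' : algebraMap F E t' = α + α ^ q) (hn' : algebraMap F E n' = α ^ q * α)
    (hαF : α ∉ Set.range (algebraMap F E)) (hαqF : α ^ q ∉ Set.range (algebraMap F E))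
    (b c : F) (h : b ^ 2 + t' * (b * c) + n' * c ^ 2 = 0) : b = 0 ∧ c = 0 := by
  by_cases hc : c = 0
  · subst hc
    refine ⟨?_, rfl⟩
    have : b ^ 2 = 0 := by linear_combination h
    exact pow_eq_zero_iff (n := 2) (by norm_num) |>.1 this
  · exfalso
    set e := algebraMap F E with he
    have h2 : (e b + α * e c) * (e b + α ^ q * e c) = 0 := by
      have h3 : e b ^ 2 + (α + α ^ q) * (e b * e c) + (α ^ q * α) * e c ^ 2 = 0 := by
        rw [← ht', ← hn']
        have := congrArg e h
        simpa [map_add, map_mul, map_pow] using this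
      linear_combination h3
    have hec : e c ≠ 0 := fun hh => hc ((map_eq_zero e).1 hh)
    rcases mul_eq_zero.1 h2 with h4 | h4
    · exact hαF ⟨-(b / c), by rw [map_neg, map_div₀]; field_simp; linear_combination -h4⟩
    · exact hαqF ⟨-(b / c), by rw [map_neg, map_div₀]; field_simp; linear_combination -h4⟩

lemma cap_core {F : Type*} [Field F] {t' n' : F}
    (hδ : t' ^ 2 - 4 * n' ≠ 0)
    (haniso : ∀ b c : F, b ^ 2 + t' * (b * c) + n' * c ^ 2 = 0 → b = 0 ∧ c = 0)
    (x y : Fin 6 → F) (hx : x ≠ 0) (hy : y ≠ 0)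
    (hwx : FWeb t' n' x) (hwy : FWeb t' n' y)
    (hpx : Phi t' n' x = 0) (hpy : Phi t' n' y = 0)
    (hB : Bf t' n' x y = 0) : ∃ u : Fˣ, u • y = x := by
  obtain ⟨hwx0, hwx3⟩ := hwx
  obtain ⟨hwy0, hwy3⟩ := hwy
  rw [Phi] at hpx hpy
  rw [Bf] at hB
  have h45 := haniso (x 1 * y 4 - y 1 * x 4) (x 1 * y 5 - y 1 * x 5)
    (by linear_combination x 1 ^ 2 * hpy + y 1 ^ 2 * hpx - x 1 * y 1 * hB)
  have hE4 : x 1 * y 4 - y 1 * x 4 = 0 := h45.1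
  have hE5 : x 1 * y 5 - y 1 * x 5 = 0 := h45.2
  by_cases hx1 : x 1 = 0
  · by_cases hy1 : y 1 = 0
    · have hx45 := haniso (x 4) (x 5) (by linear_combination hpx - x 2 * (t'^2-4*n') * hx1)
      have hy45 := haniso (y 4) (y 5) (by linear_combination hpy - y 2 * (t'^2-4*n') * hy1)
      have hx2 : x 2 ≠ 0 := by
        intro h2
        apply hx
        funext i; fin_cases i <;>
          simp [hwx0, hwx3, hx1, h2, hx45.1, hx45.2]
      have hy2 : y 2 ≠ 0 := by
        intro h2
        apply hy
        funext i; fin_cases i <;>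
          simp [hwy0, hwy3, hy1, h2, hy45.1, hy45.2]
      refine ⟨Units.mk0 (x 2 / y 2) (div_ne_zero hx2 hy2), ?_⟩
      funext i; fin_cases i <;>
        simp [hwx0, hwx3, hwy0, hwy3, hx1, hy1, hx45.1, hx45.2, hy45.1, hy45.2] <;>
        field_simp
    · exfalso
      have hx4 : x 4 = 0 := by
        have h := hE4
        rw [hx1] at h
        simpa [hy1, sub_eq_zero, eq_comm] using h
      have hx5 : x 5 = 0 := by
        have h := hE5
        rw [hx1] at h
        simpa [hy1, sub_eq_zero, eq_comm] using h
      have hx2 : x 2 ≠ 0 := by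
        intro h2
        apply hx
        funext i; fin_cases i <;> simp [hwx0, hwx3, hx1, h2, hx4, hx5]
      have hzero : (t' ^ 2 - 4 * n') * (x 2 * y 1) = 0 := by
        linear_combination hB - y 2 * (t'^2-4*n') * hx1 - (2*y 4 + t' * y 5) * hx4
          - (t' * y 4 + 2 * (n' * y 5)) * hx5
      exact hy1 (by
        rcases mul_eq_zero.1 hzero with h | h
        · exact absurd h hδ
        · rcases mul_eq_zero.1 h with h | h
          · exact absurd h hx2
          · exact h)
  · by_cases hy1 : y 1 = 0
    · exfalso
      have hy4 : y 4 = 0 := by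
        have h := hE4
        rw [hy1] at h
        simpa [hx1, sub_eq_zero] using h
      have hy5 : y 5 = 0 := by
        have h := hE5
        rw [hy1] at h
        simpa [hx1, sub_eq_zero] using h
      have hy2 : y 2 ≠ 0 := by
        intro h2
        apply hy
        funext i; fin_cases i <;> simp [hwy0, hwy3, hy1, h2, hy4, hy5]
      have hzero : (t' ^ 2 - 4 * n') * (x 1 * y 2) = 0 := by
        linear_combination hB - x 2 * (t'^2-4*n') * hy1 - (2*x 4 + t' * x 5) * hy4
          - (t' * x 4 + 2 * (n' * x 5)) * hy5
      rcases mul_eq_zero.1 hzero with h | h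
      · exact hδ h
      · rcases mul_eq_zero.1 h with h | h
        · exact hx1 h
        · exact hy2 h
    · have h0 : x 1 * y 1 * ((t' ^ 2 - 4 * n') * (x 1 * y 2 - y 1 * x 2)) = 0 := by
        linear_combination x 1 ^ 2 * hpy - y 1 ^ 2 * hpx
          - (x 1 * y 4 + y 1 * x 4 + t' * (y 1 * x 5)) * hE4
          - (t' * (x 1 * y 4) + n' * (x 1 * y 5 + y 1 * x 5)) * hE5
      have hkey : x 1 * y 2 - y 1 * x 2 = 0 := by
        rcases mul_eq_zero.1 h0 with h | h
        · rcases mul_eq_zero.1 h with h | h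
          · exact absurd h hx1
          · exact absurd h hy1
        · rcases mul_eq_zero.1 h with h | h
          · exact absurd h hδ
          · exact h
      refine ⟨Units.mk0 (x 1 / y 1) (div_ne_zero hx1 hy1), ?_⟩
      funext i
      fin_cases i
      · show x 1 / y 1 * y 0 = x 0
        rw [hwx0, hwy0]; field_simp
      · show x 1 / y 1 * y 1 = x 1
        field_simp
      · show x 1 / y 1 * y 2 = x 2
        field_simp
        linear_combination hkey
      · show x 1 / y 1 * y 3 = x 3
        rw [hwx3, hwy3]; field_simp
      · show x 1 / y 1 * y 4 = x 4
        field_simp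
        linear_combination hE4
      · show x 1 / y 1 * y 5 = x 5
        field_simp
        linear_combination hE5

lemma degen_plane {F E : Type*} [Field F] [Field E] [Algebra F E]
    (a : Fin 6 → F) (h0 : a 0 = 0) (h1 : a 1 = 0) (h3 : a 3 = 0) :
    IsDegenerate F E a := by
  refine ⟨![0, 0, 1],
    ![algebraMap F E (a 4), algebraMap F E (a 5), algebraMap F E (a 2)], fun x => ?_⟩
  simp [Qeval, Fin.sum_univ_three, h0, h1, h3]
  ring

lemma degen_of_phi {F E : Type*} [Field F] [Field E] [Algebra F E] {q : ℕ} {α : E} {t' n' : F}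
    (ht' : algebraMap F E t' = α + α ^ q)
    (hn' : algebraMap F E n' = α ^ q * α) (hne : α ≠ α ^ q)
    (a : Fin 6 → F) (hweb : FWeb t' n' a) (hphi : Phi t' n' a = 0)
    (hA1 : a 1 ≠ 0) : IsDegenerate F E a := by
  set e := algebraMap F E with he
  have hA1E : e (a 1) ≠ 0 := fun h => hA1 ((map_eq_zero e).1 h)
  have hd : α - α ^ q ≠ 0 := sub_ne_zero.2 hne
  have hd' : α ^ q - α ≠ 0 := sub_ne_zero.2 (Ne.symm hne)
  have hphiE : e (a 1) * e (a 2) * ((α + α ^ q) ^ 2 - 4 * (α ^ q * α)) +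
      (e (a 4) ^ 2 + (α + α ^ q) * (e (a 4) * e (a 5)) + (α ^ q * α) * e (a 5) ^ 2) = 0 := by
    rw [← ht', ← hn']
    have := congrArg e hphi
    simpa [Phi, map_add, map_mul, map_pow, map_sub, map_ofNat] using this
  have hw0 : e (a 0) = α ^ q * α * e (a 1) := by
    rw [hweb.1, map_mul, hn']
  have hw3 : e (a 3) = -((α + α ^ q) * e (a 1)) := by
    rw [hweb.2, map_neg, map_mul, ht']
  have hA2 : e (a 2) = -((e (a 4) + α * e (a 5)) * (e (a 4) + α ^ q * e (a 5))) /
      (e (a 1) * (α - α ^ q) ^ 2) := by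
    rw [eq_div_iff (by exact mul_ne_zero hA1E (pow_ne_zero 2 hd))]
    linear_combination hphiE
  refine ⟨![-(e (a 1) * α), e (a 1), (e (a 4) + α * e (a 5)) / (α - α ^ q)],
    ![-(α ^ q), 1, (e (a 4) + α ^ q * e (a 5)) / (e (a 1) * (α ^ q - α))], fun x => ?_⟩
  simp only [Qeval, Fin.sum_univ_three, Matrix.cons_val_zero, Matrix.cons_val_one,
    Matrix.head_cons, Matrix.cons_val_two, Matrix.tail_cons]
  rw [hw0, hw3, hA2]
  field_simp
  ring

lemma phi_of_degen {F E : Type*} [Field F] [Field E] [Algebra F E] {q : ℕ} {α : E} {t' n' : F}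
    (ht' : algebraMap F E t' = α + α ^ q)
    (hn' : algebraMap F E n' = α ^ q * α) (hne : α ≠ α ^ q)
    (a : Fin 6 → F) (hweb : FWeb t' n' a) (hdeg : IsDegenerate F E a)
    (hA1 : a 1 ≠ 0) : Phi t' n' a = 0 := by
  set e := algebraMap F E with he
  have hA1E : e (a 1) ≠ 0 := fun h => hA1 ((map_eq_zero e).1 h)
  obtain ⟨u, v, h⟩ := hdeg
  have h100 := h ![1, 0, 0]
  have h010 := h ![0, 1, 0]
  have h001 := h ![0, 0, 1]
  have h110 := h ![1, 1, 0]
  have h101 := h ![1, 0, 1]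
  have h011 := h ![0, 1, 1]
  simp only [Qeval, Fin.sum_univ_three, Matrix.cons_val_zero, Matrix.cons_val_one,
    Matrix.head_cons, Matrix.cons_val_two, Matrix.tail_cons, mul_one, mul_zero, one_pow,
    zero_pow, add_zero, zero_add, mul_zero, ne_eq, OfNat.ofNat_ne_zero,
    not_false_eq_true, one_mul] at h100 h010 h001 h110 h101 h011
  have e0 : e (a 0) = u 0 * v 0 := by linear_combination h100
  have e1 : e (a 1) = u 1 * v 1 := by linear_combination h010
  have e2 : e (a 2) = u 2 * v 2 := by linear_combination h001
  have e3 : e (a 3) = u 0 * v 1 + u 1 * v 0 := by linear_combination h110 - h100 - h010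
  have e4 : e (a 4) = u 0 * v 2 + u 2 * v 0 := by linear_combination h101 - h100 - h001
  have e5 : e (a 5) = u 1 * v 2 + u 2 * v 1 := by linear_combination h011 - h010 - h001
  have hw0 : e (a 0) = α ^ q * α * e (a 1) := by rw [hweb.1, map_mul, hn']
  have hw3 : e (a 3) = -((α + α ^ q) * e (a 1)) := by rw [hweb.2, map_neg, map_mul, ht']
  have hu1 : u 1 ≠ 0 := fun hh => hA1E (by rw [e1, hh, zero_mul])
  have hv1 : v 1 ≠ 0 := fun hh => hA1E (by rw [e1, hh, mul_zero])
  have k1 : (u 0 + α * u 1) * (v 0 + α * v 1) = 0 := by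
    linear_combination -e0 - α * e3 - α ^ 2 * e1 + hw0 + α * hw3 +
      (α ^ 2 - α * (α + α ^ q) + α ^ q * α) * e1
  have k2 : (u 0 + α ^ q * u 1) * (v 0 + α ^ q * v 1) = 0 := by
    linear_combination -e0 - α ^ q * e3 - (α ^ q) ^ 2 * e1 + hw0 + α ^ q * hw3 +
      ((α ^ q) ^ 2 - α ^ q * (α + α ^ q) + α ^ q * α) * e1
  have main : ∀ uu vv : Fin 3 → E, e (a 1) = uu 1 * vv 1 → e (a 2) = uu 2 * vv 2 →
      e (a 4) = uu 0 * vv 2 + uu 2 * vv 0 → e (a 5) = uu 1 * vv 2 + uu 2 * vv 1 →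
      uu 0 = -(α * uu 1) → vv 0 = -(α ^ q * vv 1) → Phi t' n' a = 0 := by
    intro uu vv f1 f2 f4 f5 hu hv
    have key : e (Phi t' n' a) = 0 := by
      have expand : e (Phi t' n' a) =
          e (a 1) * e (a 2) * ((α + α ^ q) ^ 2 - 4 * (α ^ q * α)) +
            (e (a 4) ^ 2 + (α + α ^ q) * (e (a 4) * e (a 5)) + (α ^ q * α) * e (a 5) ^ 2) := by
        rw [← ht', ← hn']
        simp [Phi, map_add, map_mul, map_pow, map_sub, map_ofNat]
      rw [expand, f1, f2, f4, f5, hu, hv]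
      ring
    exact (map_eq_zero e).1 key
  rcases mul_eq_zero.1 k1 with hk1 | hk1 <;> rcases mul_eq_zero.1 k2 with hk2 | hk2
  · exfalso
    have : (α - α ^ q) * u 1 = 0 := by linear_combination hk1 - hk2
    rcases mul_eq_zero.1 this with h' | h'
    · exact hne (sub_eq_zero.1 h')
    · exact hu1 h'
  · exact main u v e1 e2 e4 e5 (by linear_combination hk1) (by linear_combination hk2)
  · exact main v u (by rw [e1]; ring) (by rw [e2]; ring) (by rw [e4]; ring)
      (by rw [e5]; ring) (by linear_combination hk1) (by linear_combination hk2)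
  · exfalso
    have : (α - α ^ q) * v 1 = 0 := by linear_combination hk1 - hk2
    rcases mul_eq_zero.1 this with h' | h'
    · exact hne (sub_eq_zero.1 h')
    · exact hv1 h'

lemma smul_props {F : Type*} [Field F] {t' n' : F} {w : Fin 6 → F} (u : F)
    (h1 : FWeb t' n' w) (h2 : Phi t' n' w = 0) :
    FWeb t' n' (u • w) ∧ Phi t' n' (u • w) = 0 := by
  constructor
  · exact ⟨by simp only [Pi.smul_apply, smul_eq_mul, h1.1]; ring,
      by simp only [Pi.smul_apply, smul_eq_mul, h1.2]; ring⟩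
  · have : Phi t' n' (u • w) = u ^ 2 * Phi t' n' w := by
      simp only [Phi, Pi.smul_apply, smul_eq_mul]; ring
    rw [this, h2, mul_zero]

lemma phi_expand {F : Type*} [Field F] (t' n' : F) (s t : F) (x y : Fin 6 → F) :
    Phi t' n' (s • x + t • y) =
      s ^ 2 * Phi t' n' x + t ^ 2 * Phi t' n' y + s * t * Bf t' n' x y := by
  simp only [Phi, Bf, Pi.add_apply, Pi.smul_apply, smul_eq_mul]
  ring

lemma no_line {F : Type*} [Field F] {t' n' : F}
    (hδ : t' ^ 2 - 4 * n' ≠ 0)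
    (haniso : ∀ b c : F, b ^ 2 + t' * (b * c) + n' * c ^ 2 = 0 → b = 0 ∧ c = 0)
    (x y z : Fin 6 → F) (hx : x ≠ 0) (hy : y ≠ 0) (hz : z ≠ 0)
    (hwx : FWeb t' n' x) (hwy : FWeb t' n' y)
    (hpx : Phi t' n' x = 0) (hpy : Phi t' n' y = 0) (hpz : Phi t' n' z = 0)
    (hxy : ¬∃ u : Fˣ, u • y = x) (hxz : ¬∃ u : Fˣ, u • z = x)
    (hyz : ¬∃ u : Fˣ, u • z = y)
    (s t : F) (hzeq : z = s • x + t • y) : False := by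
  have hs : s ≠ 0 := by
    rintro rfl
    have ht : t ≠ 0 := by
      rintro rfl
      simp at hzeq
      exact hz hzeq
    apply hyz
    refine ⟨(Units.mk0 t ht)⁻¹, ?_⟩
    rw [hzeq]
    simp [Units.smul_def, smul_smul, inv_mul_cancel₀ ht]
  have ht : t ≠ 0 := by
    rintro rfl
    apply hxz
    refine ⟨(Units.mk0 s hs)⁻¹, ?_⟩
    rw [hzeq]
    simp [Units.smul_def, smul_smul, inv_mul_cancel₀ hs]
  have hB : Bf t' n' x y = 0 := by
    have h := phi_expand t' n' s t x y
    rw [← hzeq, hpz, hpx, hpy] at h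
    have : s * t * Bf t' n' x y = 0 := by linear_combination -h
    rcases mul_eq_zero.1 this with h' | h'
    · rcases mul_eq_zero.1 h' with h'' | h''
      · exact absurd h'' hs
      · exact absurd h'' ht
    · exact h'
  exact hxy (cap_core hδ haniso x y hx hy hwx hwy hpx hpy hB)

def lmM {F : Type*} [Field F] (t' n' : F) : (Fin 6 → F) →ₗ[F] (Fin 2 → F) where
  toFun a := ![a 0 - n' * a 1, a 3 + t' * a 1]
  map_add' a b := by funext i; fin_cases i <;> simp <;> ring
  map_smul' c a := by funext i; fin_cases i <;> simp <;> ring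

def lmW {F : Type*} [Field F] : (Fin 6 → F) →ₗ[F] (Fin 3 → F) where
  toFun a := ![a 0, a 1, a 3]
  map_add' a b := by funext i; fin_cases i <;> simp
  map_smul' c a := by funext i; fin_cases i <;> simp

lemma finrank_ker_lmM {F : Type*} [Field F] (t' n' : F) :
    Module.finrank F (LinearMap.ker (lmM (F := F) t' n')) = 4 := by
  have h := LinearMap.finrank_range_add_finrank_ker (lmM (F := F) t' n')
  have hsurj : Function.Surjective (lmM (F := F) t' n') := by
    intro c
    refine ⟨![c 0, 0, 0, c 1, 0, 0], ?_⟩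
    funext i; fin_cases i <;> simp [lmM]
  rw [LinearMap.range_eq_top.2 hsurj, finrank_top] at h
  simp [Module.finrank_pi] at h
  omega

lemma finrank_ker_lmW {F : Type*} [Field F] :
    Module.finrank F (LinearMap.ker (lmW (F := F))) = 3 := by
  have h := LinearMap.finrank_range_add_finrank_ker (lmW (F := F))
  have hsurj : Function.Surjective (lmW (F := F)) := by
    intro c
    refine ⟨![c 0, c 1, 0, c 2, 0, 0], ?_⟩
    funext i; fin_cases i <;> simp [lmW]
  rw [LinearMap.range_eq_top.2 hsurj, finrank_top] at h
  simp [Module.finrank_pi] at h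
  omega

lemma mem_ker_lmW {F : Type*} [Field F] (a : Fin 6 → F) :
    a ∈ LinearMap.ker (lmW (F := F)) ↔ a 0 = 0 ∧ a 1 = 0 ∧ a 3 = 0 := by
  rw [LinearMap.mem_ker]
  constructor
  · intro h
    refine ⟨?_, ?_, ?_⟩
    · simpa [lmW] using congrFun h 0
    · simpa [lmW] using congrFun h 1
    · simpa [lmW] using congrFun h 2
  · rintro ⟨h0, h1, h3⟩
    funext i; fin_cases i <;> simp [lmW, h0, h1, h3]
/-- The quadrics of PG(2,q) whose extensions pass through the conjugate
points `P1 = (1:α:0)` and `P2 = (1:α^q:0)` of PG(2,q^2)∖PG(2,q) (with `α` a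
primitive element of GF(q^2) over GF(q)) are exactly those with
`a11 = α^{q+1} a22` and `a12 = -(α+α^q) a22`; they form a web, whose
degenerate quadrics consist of an elliptic quadric `Q'` (with `q^2+1`
points, no three collinear) together with a plane tangent to `Q'` at the
point `(0:0:1:0:0:0)`. -/
theorem web_through_conjugate_points (F E : Type*) [Field F] [Fintype F]
    [Field E] [Fintype E] [Algebra F E] (q : ℕ) (hq : Fintype.card F = q)
    (hE : Fintype.card E = q ^ 2) (α : E)
    (hαgen : ∀ x : E, x ≠ 0 → ∃ n : ℕ, α ^ n = x)
    (hαF : α ∉ Set.range (algebraMap F E)) :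
    (∀ a : Fin 6 → F,
      (Qeval (fun i => algebraMap F E (a i)) ![1, α, 0] = 0 ∧
        Qeval (fun i => algebraMap F E (a i)) ![1, α ^ q, 0] = 0) ↔
      WebC F q α a) ∧
    (∃ M : Submodule F (Fin 6 → F),
      (M : Set (Fin 6 → F)) = {a | WebC F q α a} ∧ Module.finrank F M = 4) ∧
    (∃ Qs Pl : Set (Projectivization F (Fin 6 → F)),
      {c : Projectivization F (Fin 6 → F) |
          ∃ (a : Fin 6 → F) (ha : a ≠ 0), c = Projectivization.mk F a ha ∧
            WebC F q α a ∧ IsDegenerate F E a} = Qs ∪ Pl ∧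
      Nat.card Qs = q ^ 2 + 1 ∧
      (∀ c₁ ∈ Qs, ∀ c₂ ∈ Qs, ∀ c₃ ∈ Qs, c₁ ≠ c₂ → c₁ ≠ c₃ → c₂ ≠ c₃ →
        ∀ (a₁ : Fin 6 → F) (h₁ : a₁ ≠ 0) (a₂ : Fin 6 → F) (h₂ : a₂ ≠ 0)
          (a₃ : Fin 6 → F) (h₃ : a₃ ≠ 0),
          c₁ = Projectivization.mk F a₁ h₁ → c₂ = Projectivization.mk F a₂ h₂ →
          c₃ = Projectivization.mk F a₃ h₃ →
          LinearIndependent F ![a₁, a₂, a₃]) ∧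
      (∃ W : Submodule F (Fin 6 → F), Module.finrank F W = 3 ∧
        Pl = {c | ∃ (a : Fin 6 → F) (ha : a ≠ 0),
          c = Projectivization.mk F a ha ∧ a ∈ W}) ∧
      Qs ∩ Pl = {c | ∃ ha : (Pi.single 2 1 : Fin 6 → F) ≠ 0,
        c = Projectivization.mk F (Pi.single 2 1) ha}) := by
  classical
  have einj : Function.Injective (algebraMap F E) := (algebraMap F E).injective
  have hfixF : ∀ y : F, (algebraMap F E y) ^ q = algebraMap F E y := fun y => by
    rw [← map_pow, ← hq, FiniteField.pow_card]
  have hαq : α ^ q ≠ α := fun h => hαF (fixedfield hq α h)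
  have hne : α ≠ α ^ q := fun h => hαq h.symm
  have hqq : (α ^ q) ^ q = α := by
    rw [← pow_mul]
    have hq2 : q * q = q ^ 2 := (sq q).symm
    rw [hq2, ← hE, FiniteField.pow_card]
  have hαqF : α ^ q ∉ Set.range (algebraMap F E) := by
    rintro ⟨y, hy⟩
    have h1 : (α ^ q) ^ q = α ^ q := by rw [← hy]; exact hfixF y
    exact hαq (h1.symm.trans hqq)
  obtain ⟨p, hpchar⟩ := CharP.exists F
  haveI : CharP F p := hpchar
  obtain ⟨np, hpprime, hcardF⟩ := FiniteField.card F p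
  haveI : Fact p.Prime := ⟨hpprime⟩
  haveI : CharP E p := charP_of_injective_ringHom einj p
  have hqpn : q = p ^ (np : ℕ) := by rw [← hq, hcardF]
  have htfix : (α + α ^ q) ^ q = α + α ^ q := by
    conv_lhs => rw [hqpn]
    rw [add_pow_char_pow, ← hqpn, hqq]
    ring
  obtain ⟨t', ht'⟩ := fixedfield hq _ htfix
  have hnfix : (α ^ q * α) ^ q = α ^ q * α := by rw [mul_pow, hqq]; ring
  obtain ⟨n', hn'⟩ := fixedfield hq _ hnfix
  have haniso : ∀ b c : F, b ^ 2 + t' * (b * c) + n' * c ^ 2 = 0 → b = 0 ∧ c = 0 :=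
    fun b c h => aniso ht' hn' hαF hαqF b c h
  have hδE : algebraMap F E (t' ^ 2 - 4 * n') = (α - α ^ q) ^ 2 := by
    rw [map_sub, map_pow, ht', map_mul, map_ofNat, hn']; ring
  have hδ : t' ^ 2 - 4 * n' ≠ 0 := by
    intro h
    rw [h, map_zero] at hδE
    exact pow_ne_zero 2 (sub_ne_zero.2 hne) hδE.symm
  have hwebc : ∀ a : Fin 6 → F, WebC F q α a ↔ FWeb t' n' a := by
    intro a
    constructor
    · rintro ⟨h1, h2⟩
      constructor
      · apply einj
        rw [map_mul, hn']
        linear_combination h1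
      · apply einj
        rw [map_neg, map_mul, ht']
        linear_combination h2
    · rintro ⟨h1, h2⟩
      constructor
      · rw [h1, map_mul, hn']
        ring
      · rw [h2, map_neg, map_mul, ht']
        ring
  refine ⟨?_, ?_, ?_⟩
  · -- Part 1
    intro a
    constructor
    · rintro ⟨h1, h2⟩
      simp only [Qeval, Matrix.cons_val_zero, Matrix.cons_val_one, Matrix.head_cons,
        Matrix.cons_val_two, Matrix.tail_cons] at h1 h2
      have h4 : algebraMap F E (a 3) = -(α + α ^ q) * algebraMap F E (a 1) := by
        have h3 : (α - α ^ q) *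
            (algebraMap F E (a 3) + (α + α ^ q) * algebraMap F E (a 1)) = 0 := by
          linear_combination h1 - h2
        rcases mul_eq_zero.1 h3 with h | h
        · exact absurd (sub_eq_zero.1 h) hne
        · linear_combination h
      exact ⟨by linear_combination h1 - α * h4, h4⟩
    · rintro ⟨h1, h2⟩
      constructor <;>
        simp only [Qeval, Matrix.cons_val_zero, Matrix.cons_val_one, Matrix.head_cons,
          Matrix.cons_val_two, Matrix.tail_cons]
      · linear_combination h1 + α * h2
      · linear_combination h1 + α ^ q * h2
  · -- Part 2
    refine ⟨LinearMap.ker (lmM t' n'), ?_, finrank_ker_lmM t' n'⟩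
    ext a
    simp only [SetLike.mem_coe, LinearMap.mem_ker, Set.mem_setOf_eq]
    rw [hwebc a]
    constructor
    · intro h
      have h0 := congrFun h 0
      have h1 := congrFun h 1
      simp only [lmM, LinearMap.coe_mk, AddHom.coe_mk, Matrix.cons_val_zero,
        Matrix.cons_val_one, Matrix.head_cons, Pi.zero_apply] at h0 h1
      exact ⟨by linear_combination h0, by linear_combination h1⟩
    · rintro ⟨h1, h2⟩
      funext i
      fin_cases i <;> simp [lmM, h1, h2]
  · -- Part 3
    set e2v : Fin 6 → F := Pi.single 2 1 with he2v
    have hsingle_ne : e2v ≠ 0 := by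
      intro h
      have := congrFun h 2
      simp [he2v] at this
    have hs0 : e2v 0 = 0 := by simp [he2v]
    have hs1 : e2v 1 = 0 := by simp [he2v]
    have hs2 : e2v 2 = 1 := by simp [he2v]
    have hs3 : e2v 3 = 0 := by simp [he2v]
    have hs4 : e2v 4 = 0 := by simp [he2v]
    have hs5 : e2v 5 = 0 := by simp [he2v]
    set vv : F × F → (Fin 6 → F) := fun bc =>
      ![n', 1, -(bc.1 ^ 2 + t' * (bc.1 * bc.2) + n' * bc.2 ^ 2) / (t' ^ 2 - 4 * n'),
        -t', bc.1, bc.2] with hvv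
    have hv0 : ∀ bc : F × F, vv bc 0 = n' := fun _ => rfl
    have hv1 : ∀ bc : F × F, vv bc 1 = 1 := fun _ => rfl
    have hv2 : ∀ bc : F × F, vv bc 2 =
        -(bc.1 ^ 2 + t' * (bc.1 * bc.2) + n' * bc.2 ^ 2) / (t' ^ 2 - 4 * n') := fun _ => rfl
    have hv3 : ∀ bc : F × F, vv bc 3 = -t' := fun _ => rfl
    have hv4 : ∀ bc : F × F, vv bc 4 = bc.1 := fun _ => rfl
    have hv5 : ∀ bc : F × F, vv bc 5 = bc.2 := fun _ => rfl
    have hvv_ne : ∀ bc, vv bc ≠ 0 := by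
      intro bc h
      have := congrFun h 1
      rw [hv1] at this
      simp at this
    have hvv_web : ∀ bc, FWeb t' n' (vv bc) := by
      intro bc
      exact ⟨by rw [hv0, hv1, mul_one], by rw [hv3, hv1, mul_one]⟩
    have hvv_phi : ∀ bc, Phi t' n' (vv bc) = 0 := by
      intro bc
      rw [Phi, hv1, hv2, hv4, hv5]
      rw [one_mul, div_mul_cancel₀ _ hδ]
      ring
    have hs_web : FWeb t' n' e2v := ⟨by rw [hs0, hs1]; ring, by rw [hs3, hs1]; ring⟩
    have hs_phi : Phi t' n' e2v = 0 := by simp [Phi, hs1, hs4, hs5]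
    set f : Option (F × F) → Projectivization F (Fin 6 → F) := fun o =>
      o.elim (Projectivization.mk F e2v hsingle_ne)
        (fun bc => Projectivization.mk F (vv bc) (hvv_ne bc)) with hf
    have hfnone : f none = Projectivization.mk F e2v hsingle_ne := rfl
    have hfsome : ∀ bc, f (some bc) = Projectivization.mk F (vv bc) (hvv_ne bc) := fun _ => rfl
    have hQmem : ∀ (a : Fin 6 → F) (ha : a ≠ 0),
        ((∃ o, f o = Projectivization.mk F a ha) ↔ FWeb t' n' a ∧ Phi t' n' a = 0) := by
      intro a ha
      constructor
      · rintro ⟨o, ho⟩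
        cases o with
        | none =>
          rw [hfnone, Projectivization.mk_eq_mk_iff] at ho
          obtain ⟨u, hu⟩ := ho
          have ha2 : a = ((u⁻¹ : Fˣ) : F) • e2v := by
            funext i
            have hi := congrFun hu i
            simp only [Pi.smul_apply, Units.smul_def, smul_eq_mul] at hi ⊢
            rw [← hi, Units.val_inv_eq_inv_val, inv_mul_cancel_left₀ u.ne_zero]
          rw [ha2]
          exact smul_props _ hs_web hs_phi
        | some bc =>
          rw [hfsome, Projectivization.mk_eq_mk_iff] at ho
          obtain ⟨u, hu⟩ := ho
          have ha2 : a = ((u⁻¹ : Fˣ) : F) • vv bc := by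
            funext i
            have hi := congrFun hu i
            simp only [Pi.smul_apply, Units.smul_def, smul_eq_mul] at hi ⊢
            rw [← hi, Units.val_inv_eq_inv_val, inv_mul_cancel_left₀ u.ne_zero]
          rw [ha2]
          exact smul_props _ (hvv_web bc) (hvv_phi bc)
      · rintro ⟨hfw, hphi⟩
        by_cases h1 : a 1 = 0
        · have h45 := haniso (a 4) (a 5)
            (by rw [Phi] at hphi; linear_combination hphi - a 2 * (t' ^ 2 - 4 * n') * h1)
          have h2ne : a 2 ≠ 0 := by
            intro h2
            apply ha
            funext i
            fin_cases i <;> simp [hfw.1, hfw.2, h1, h2, h45.1, h45.2]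
          refine ⟨none, ?_⟩
          rw [hfnone, Projectivization.mk_eq_mk_iff]
          refine ⟨Units.mk0 (a 2)⁻¹ (inv_ne_zero h2ne), ?_⟩
          funext i
          fin_cases i <;>
            simp [Units.smul_def, hfw.1, hfw.2, h1, h45.1, h45.2, hs0, hs1, hs2, hs3,
              hs4, hs5, inv_mul_cancel₀ h2ne]
        · refine ⟨some (a 4 / a 1, a 5 / a 1), ?_⟩
          rw [hfsome, Projectivization.mk_eq_mk_iff]
          refine ⟨Units.mk0 (a 1)⁻¹ (inv_ne_zero h1), ?_⟩
          funext i
          fin_cases i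
          · show (a 1)⁻¹ * a 0 = vv (a 4 / a 1, a 5 / a 1) 0
            rw [hv0, hfw.1]
            field_simp
          · show (a 1)⁻¹ * a 1 = vv (a 4 / a 1, a 5 / a 1) 1
            rw [hv1]
            exact inv_mul_cancel₀ h1
          · show (a 1)⁻¹ * a 2 = vv (a 4 / a 1, a 5 / a 1) 2
            rw [hv2]
            rw [Phi] at hphi
            rw [eq_div_iff hδ]
            field_simp
            linear_combination hphi
          · show (a 1)⁻¹ * a 3 = vv (a 4 / a 1, a 5 / a 1) 3
            rw [hv3, hfw.2]
            field_simp
          · show (a 1)⁻¹ * a 4 = vv (a 4 / a 1, a 5 / a 1) 4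
            rw [hv4, inv_mul_eq_div]
          · show (a 1)⁻¹ * a 5 = vv (a 4 / a 1, a 5 / a 1) 5
            rw [hv5, inv_mul_eq_div]
    refine ⟨Set.range f,
      {c | ∃ (a : Fin 6 → F) (ha : a ≠ 0),
        c = Projectivization.mk F a ha ∧ a ∈ LinearMap.ker (lmW (F := F))},
      ?_, ?_, ?_, ?_, ?_⟩
    · -- union
      ext c
      simp only [Set.mem_setOf_eq, Set.mem_union, Set.mem_range]
      constructor
      · rintro ⟨a, ha, rfl, hwebC, hdeg⟩
        have hfw := (hwebc a).1 hwebC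
        by_cases h1 : a 1 = 0
        · right
          exact ⟨a, ha, rfl, (mem_ker_lmW a).2
            ⟨by rw [hfw.1, h1, mul_zero], h1, by rw [hfw.2, h1, mul_zero, neg_zero]⟩⟩
        · left
          exact (hQmem a ha).2 ⟨hfw, phi_of_degen ht' hn' hne a hfw hdeg h1⟩
      · rintro (⟨o, rfl⟩ | ⟨a, ha, rfl, hW⟩)
        · cases o with
          | none =>
            exact ⟨e2v, hsingle_ne, hfnone, (hwebc _).2 hs_web, degen_plane _ hs0 hs1 hs3⟩
          | some bc =>
            refine ⟨vv bc, hvv_ne bc, hfsome bc, (hwebc _).2 (hvv_web bc),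
              degen_of_phi ht' hn' hne _ (hvv_web bc) (hvv_phi bc) ?_⟩
            rw [hv1]
            exact one_ne_zero
        · obtain ⟨h0, h1, h3⟩ := (mem_ker_lmW a).1 hW
          exact ⟨a, ha, rfl,
            (hwebc _).2 ⟨by rw [h0, h1, mul_zero], by rw [h3, h1, mul_zero, neg_zero]⟩,
            degen_plane _ h0 h1 h3⟩
    · -- cardinality
      have hinj : Function.Injective f := by
        intro o1 o2 h
        match o1, o2 with
        | none, none => rfl
        | some bc, some bc' =>
          rw [hfsome, hfsome, Projectivization.mk_eq_mk_iff] at h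
          obtain ⟨u, hu⟩ := h
          have h1 := congrFun hu 1
          have h4 := congrFun hu 4
          have h5 := congrFun hu 5
          simp only [Units.smul_def, Pi.smul_apply, smul_eq_mul, hv1, hv4, hv5,
            mul_one] at h1 h4 h5
          rw [h1] at h4 h5
          simp only [one_mul] at h4 h5
          rw [show bc = bc' from Prod.ext h4.symm h5.symm]
        | none, some bc =>
          exfalso
          rw [hfnone, hfsome, Projectivization.mk_eq_mk_iff] at h
          obtain ⟨u, hu⟩ := h
          have h1 := congrFun hu 1
          simp only [Units.smul_def, Pi.smul_apply, smul_eq_mul, hv1, hs1, mul_one] at h1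
          exact u.ne_zero h1
        | some bc, none =>
          exfalso
          rw [hfnone, hfsome, Projectivization.mk_eq_mk_iff] at h
          obtain ⟨u, hu⟩ := h
          have h1 := congrFun hu 1
          simp only [Units.smul_def, Pi.smul_apply, smul_eq_mul, hv1, hs1, mul_zero] at h1
          exact one_ne_zero h1.symm
      rw [Nat.card_range_of_injective hinj]
      simp only [Nat.card_eq_fintype_card, Fintype.card_option, Fintype.card_prod, hq]
      ring
    · -- cap property
      rintro c1 hc1 c2 hc2 c3 hc3 h12 h13 h23 a1 h1 a2 h2 a3 h3 rfl rfl rfl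
      obtain ⟨hw1, hp1⟩ := (hQmem a1 h1).1 hc1
      obtain ⟨hw2, hp2⟩ := (hQmem a2 h2).1 hc2
      obtain ⟨hw3, hp3⟩ := (hQmem a3 h3).1 hc3
      have hne_mk : ∀ (x y : Fin 6 → F) (hx : x ≠ 0) (hy : y ≠ 0),
          Projectivization.mk F x hx ≠ Projectivization.mk F y hy →
          ¬∃ u : Fˣ, u • y = x := by
        rintro x y hx hy hnmk ⟨u, hu⟩
        exact hnmk ((Projectivization.mk_eq_mk_iff F x y hx hy).2 ⟨u, hu⟩)
      have hab := hne_mk a1 a2 h1 h2 h12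
      have hac := hne_mk a1 a3 h1 h3 h13
      have hbc := hne_mk a2 a3 h2 h3 h23
      have hba := hne_mk a2 a1 h2 h1 h12.symm
      have hca := hne_mk a3 a1 h3 h1 h13.symm
      have hcb := hne_mk a3 a2 h3 h2 h23.symm
      rw [Fintype.linearIndependent_iff]
      intro g hg
      simp only [Fin.sum_univ_three, Matrix.cons_val_zero, Matrix.cons_val_one,
        Matrix.head_cons, Matrix.cons_val_two, Matrix.tail_cons] at hg
      by_cases hg2 : g 2 = 0
      · by_cases hg1 : g 1 = 0
        · have hg0 : g 0 • a1 = 0 := by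
            rw [hg1, hg2] at hg
            simpa using hg
          have : g 0 = 0 := (smul_eq_zero.1 hg0).resolve_right h1
          intro i
          fin_cases i
          · exact this
          · exact hg1
          · exact hg2
        · exfalso
          refine no_line hδ haniso a1 a3 a2 h1 h3 h2 hw1 hw3 hp1 hp3 hp2
            hac hab hcb (-(g 0 / g 1)) 0 ?_
          funext i
          have hgi := congrFun hg i
          simp only [Pi.add_apply, Pi.smul_apply, smul_eq_mul, Pi.zero_apply, zero_mul,
            add_zero, zero_smul] at hgi ⊢
          field_simp
          linear_combination hgi - a3 i * hg2
      · exfalso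
        refine no_line hδ haniso a1 a2 a3 h1 h2 h3 hw1 hw2 hp1 hp2 hp3
          hab hac hbc (-(g 0 / g 2)) (-(g 1 / g 2)) ?_
        funext i
        have hgi := congrFun hg i
        simp only [Pi.add_apply, Pi.smul_apply, smul_eq_mul, Pi.zero_apply] at hgi ⊢
        field_simp
        linear_combination hgi
    · exact ⟨LinearMap.ker (lmW (F := F)), finrank_ker_lmW, rfl⟩
    · -- intersection
      ext c
      simp only [Set.mem_inter_iff, Set.mem_setOf_eq, Set.mem_range]
      constructor
      · rintro ⟨⟨o, rfl⟩, ⟨a, ha, heq, hW⟩⟩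
        obtain ⟨k0, k1, k3⟩ := (mem_ker_lmW a).1 hW
        cases o with
        | none => exact ⟨hsingle_ne, rfl⟩
        | some bc =>
          exfalso
          rw [hfsome, Projectivization.mk_eq_mk_iff] at heq
          obtain ⟨u, hu⟩ := heq
          have hcoord := congrFun hu 1
          simp only [Units.smul_def, Pi.smul_apply, smul_eq_mul, hv1, k1, mul_zero] at hcoord
          exact one_ne_zero hcoord.symm
      · rintro ⟨hane, rfl⟩
        exact ⟨⟨none, rfl⟩, ⟨e2v, hsingle_ne, rfl, (mem_ker_lmW _).2 ⟨hs0, hs1, hs3⟩⟩⟩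
end

section
/- Under the action of a Singer cyclic group S of PGL(3,q), the set of q(q+1)(q^2+q+1)/2 bi-lines of PG(2,q) splits into exactly q(q+1)/2 orbits, each of size q^2+q+1; and for each orbit b, every line l of PG(2,q) is a component of exactly two bi-lines of b. -/
/-!
Regularity forces every line to have minimal period `N = q^2 + q + 1` under `act`, so
`act^[k]` fixes a line exactly when `N ∣ k`. As `N` is odd, no power `act^[k]` with `N ∤ k`
can swap the two lines of a bi-line, hence every bi-line also has minimal period `N` under
`Finset.image act`: all orbits of bi-lines have size `N`, there are `C(N, 2) / N = q(q+1)/2`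
of them, and a line `l` lies in exactly two bi-lines of the orbit of `{x, y}`, namely the
images under the unique `act^[i]` and `act^[j]` (`i, j < N`) sending `x`, resp. `y`, to `l`.
-/

open Function

theorem Nat.card_range_mul_of_card_fiber {β γ : Type*} [Finite β] (φ : β → γ) (n : ℕ)
    (hφ : ∀ b, Nat.card {b' // φ b' = φ b} = n) :
    Nat.card (Set.range φ) * n = Nat.card β := by
  classical
  have := Fintype.ofFinite β
  rw [← Nat.card_congr (Equiv.sigmaFiberEquiv (Set.rangeFactorization φ)), Nat.card_sigma,
    Finset.sum_congr rfl fun c _ => ?_, Finset.sum_const, Finset.card_univ, smul_eq_mul,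
    Nat.card_eq_fintype_card]
  obtain ⟨_, b, rfl⟩ := c
  rw [← hφ b]
  exact Nat.card_congr (Equiv.subtypeEquivRight fun _ => Subtype.ext_iff)

namespace Function

variable {β : Type*} {g : β → β} {x y : β}

theorem ncard_range_iterate (hx : x ∈ periodicPts g) :
    (Set.range (g^[·] x)).ncard = minimalPeriod g x := by
  have hrange : Set.range (g^[·] x) = (g^[·] x) '' Set.Iio (minimalPeriod g x) := by
    refine (Set.image_subset_range _ _).antisymm' ?_
    rintro _ ⟨n, rfl⟩
    exact ⟨n % minimalPeriod g x, Nat.mod_lt _ (minimalPeriod_pos_of_mem_periodicPts hx),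
      iterate_mod_minimalPeriod_eq⟩
  rw [hrange, iterate_injOn_Iio_minimalPeriod.ncard_image, Set.ncard_Iio_nat]

theorem range_iterate_eq_of_mem (hx : x ∈ periodicPts g) (hy : y ∈ Set.range (g^[·] x)) :
    Set.range (g^[·] y) = Set.range (g^[·] x) := by
  obtain ⟨k, rfl⟩ := hy
  refine Set.Subset.antisymm
    (Set.range_subset_iff.2 fun n => ⟨n + k, iterate_add_apply g n k x⟩) ?_
  rintro _ ⟨n, rfl⟩
  -- `g^[n + (m * k - k)] (g^[k] x) = g^[n + m * k] x = g^[n] x` for the period `m` of `x`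
  have hkm : k ≤ minimalPeriod g x * k :=
    Nat.le_mul_of_pos_left k (minimalPeriod_pos_of_mem_periodicPts hx)
  refine ⟨n + (minimalPeriod g x * k - k), ?_⟩
  dsimp only
  rw [← iterate_add_apply, Nat.add_assoc, Nat.sub_add_cancel hkm, iterate_add_apply,
    ((isPeriodicPt_minimalPeriod g x).mul_const k).eq]

end Function

theorem Finset.image_iterate_eq {α : Type*} [DecidableEq α] {f : α → α} {n : ℕ} :
    image (f^[n]) = (image f)^[n] := by
  induction n with
  | zero => funext s; simp
  | succ n ih => funext s; rw [iterate_succ', iterate_succ', ← ih, comp_apply, image_image]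

def IsRegularCyclic {α : Type*} (f : α → α) (N : ℕ) : Prop :=
  ∀ x y, ∃! k, k < N ∧ f^[k] x = y

def finsetOrbit {α : Type*} [DecidableEq α] (f : α → α) (s : Finset α) : Set (Finset α) :=
  Set.range fun k => s.image f^[k]

theorem finsetOrbit_eq_range_iterate {α : Type*} [DecidableEq α] (f : α → α) (s : Finset α) :
    finsetOrbit f s = Set.range ((Finset.image f)^[·] s) := by
  simp only [finsetOrbit, Finset.image_iterate_eq]

namespace IsRegularCyclic

variable {α : Type*} {f : α → α} {N : ℕ}

theorem pos (h : IsRegularCyclic f N) (x : α) : 0 < N :=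
  Nat.zero_lt_of_lt (h x x).exists.choose_spec.1

theorem minimalPeriod_eq (h : IsRegularCyclic f N) (x : α) : minimalPeriod f x = N := by
  obtain ⟨k, ⟨hk, hkx⟩, -⟩ := h (f x) x
  have hper : IsPeriodicPt f (k + 1) x := by rwa [IsPeriodicPt, IsFixedPt, iterate_succ_apply]
  have hpos := hper.minimalPeriod_pos k.succ_pos
  have hle := hper.minimalPeriod_le k.succ_pos
  obtain ⟨_, -, huniq⟩ := h x x
  by_contra hne
  have := huniq _ ⟨by omega, isPeriodicPt_minimalPeriod f x⟩
  have := huniq 0 ⟨by omega, rfl⟩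
  omega

theorem mem_periodicPts (h : IsRegularCyclic f N) (x : α) : x ∈ periodicPts f :=
  minimalPeriod_pos_iff_mem_periodicPts.1 (h.minimalPeriod_eq x ▸ h.pos x)

theorem iterate_eq_self_iff (h : IsRegularCyclic f N) {x : α} {k : ℕ} :
    f^[k] x = x ↔ N ∣ k := by
  rw [← h.minimalPeriod_eq x, ← isPeriodicPt_iff_minimalPeriod_dvd]
  rfl

theorem iterate_mod (h : IsRegularCyclic f N) (x : α) (k : ℕ) : f^[k % N] x = f^[k] x :=
  h.minimalPeriod_eq x ▸ iterate_mod_minimalPeriod_eq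

theorem injective (h : IsRegularCyclic f N) : Injective f := by
  intro x y hxy
  obtain ⟨k, ⟨-, rfl⟩, -⟩ := h x y
  have hk : f^[k] (f x) = f x := by rw [← iterate_succ_apply, iterate_succ_apply', hxy]
  rw [h.iterate_eq_self_iff.2 (h.iterate_eq_self_iff.1 hk)]

theorem nat_card_eq [Nonempty α] (h : IsRegularCyclic f N) : Nat.card α = N := by
  obtain ⟨x⟩ := ‹Nonempty α›
  have hrange : Set.range (f^[·] x) = Set.univ :=
    Set.eq_univ_of_forall fun y => ⟨_, (h x y).exists.choose_spec.2⟩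
  rw [← Set.ncard_univ, ← hrange, ncard_range_iterate (h.mem_periodicPts x), h.minimalPeriod_eq]

theorem finite (h : IsRegularCyclic f N) : Finite α := by
  cases isEmpty_or_nonempty α
  · infer_instance
  · exact Nat.finite_of_card_ne_zero (h.nat_card_eq ▸ (h.pos (Classical.arbitrary α)).ne')

theorem nat_card_finset_card_eq [Nonempty α] (h : IsRegularCyclic f N) (k : ℕ) :
    Nat.card {s : Finset α // s.card = k} = N.choose k := by
  have := h.finite
  have := Fintype.ofFinite α
  rw [Nat.card_eq_fintype_card, Fintype.card_finset_len, ← Nat.card_eq_fintype_card,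
    h.nat_card_eq]

variable [DecidableEq α]

theorem minimalPeriod_image_of_card_eq_two (h : IsRegularCyclic f N) (hN : Odd N)
    {s : Finset α} (hs : s.card = 2) : minimalPeriod (Finset.image f) s = N := by
  set m := minimalPeriod (Finset.image f) s
  have hNs : IsPeriodicPt (Finset.image f) N s := by
    change (Finset.image f)^[N] s = s
    rw [← Finset.image_iterate_eq]
    conv_rhs => rw [← s.image_id]
    exact Finset.image_congr fun x _ => h.iterate_eq_self_iff.2 dvd_rfl
  have hm : s.image f^[m] = s := by
    rw [Finset.image_iterate_eq]
    exact isPeriodicPt_minimalPeriod _ _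
  refine Nat.dvd_antisymm hNs.minimalPeriod_dvd ?_
  obtain ⟨x, y, -, rfl⟩ := Finset.card_eq_two.mp hs
  have hmaps : ∀ z ∈ ({x, y} : Finset α), f^[m] z = x ∨ f^[m] z = y := fun z hz => by
    simpa [hm] using Finset.mem_image_of_mem f^[m] hz
  rcases hmaps x (by simp) with hx | hx
  · exact h.iterate_eq_self_iff.1 hx
  rcases hmaps y (by simp) with hy | hy
  · -- `f^[m]` swaps `x` and `y`, so `N ∣ 2 * m`, and `N` is odd
    have h2m : N ∣ 2 * m := h.iterate_eq_self_iff.1 (by rw [two_mul, iterate_add_apply, hx, hy])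
    exact (Nat.coprime_two_right.2 hN).dvd_of_dvd_mul_left h2m
  · exact h.iterate_eq_self_iff.1 hy

theorem injOn_image_iterate_of_card_eq_two (h : IsRegularCyclic f N) (hN : Odd N)
    {s : Finset α} (hs : s.card = 2) : Set.InjOn (fun k => s.image f^[k]) (Set.Iio N) := by
  simp only [Finset.image_iterate_eq]
  exact h.minimalPeriod_image_of_card_eq_two hN hs ▸ iterate_injOn_Iio_minimalPeriod

theorem mem_periodicPts_image_of_card_eq_two (h : IsRegularCyclic f N) (hN : Odd N)
    {s : Finset α} (hs : s.card = 2) : s ∈ periodicPts (Finset.image f) :=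
  minimalPeriod_pos_iff_mem_periodicPts.1 (h.minimalPeriod_image_of_card_eq_two hN hs ▸ hN.pos)

theorem nat_card_finsetOrbit (h : IsRegularCyclic f N) (hN : Odd N)
    {s : Finset α} (hs : s.card = 2) : Nat.card (finsetOrbit f s) = N := by
  rw [Nat.card_coe_set_eq, finsetOrbit_eq_range_iterate,
    ncard_range_iterate (h.mem_periodicPts_image_of_card_eq_two hN hs),
    h.minimalPeriod_image_of_card_eq_two hN hs]

theorem card_of_mem_finsetOrbit (h : IsRegularCyclic f N) {s t : Finset α}
    (ht : t ∈ finsetOrbit f s) : t.card = s.card := by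
  obtain ⟨k, rfl⟩ := ht
  exact Finset.card_image_of_injective s (h.injective.iterate k)

theorem finsetOrbit_eq_iff (h : IsRegularCyclic f N) (hN : Odd N)
    {s t : Finset α} (hs : s.card = 2) :
    finsetOrbit f t = finsetOrbit f s ↔ t ∈ finsetOrbit f s := by
  refine ⟨fun hts => hts ▸ ⟨0, t.image_id⟩, fun ht => ?_⟩
  simp only [finsetOrbit_eq_range_iterate] at ht ⊢
  exact range_iterate_eq_of_mem (h.mem_periodicPts_image_of_card_eq_two hN hs) ht

theorem nat_card_range_finsetOrbit_mul (h : IsRegularCyclic f N) (hN : Odd N) :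
    Nat.card (Set.range fun s : {s : Finset α // s.card = 2} => finsetOrbit f s) * N =
      Nat.card {s : Finset α // s.card = 2} := by
  have := h.finite
  refine Nat.card_range_mul_of_card_fiber _ N fun s => ?_
  rw [← h.nat_card_finsetOrbit hN s.2]
  refine Nat.card_congr ((Equiv.subtypeSubtypeEquivSubtypeInter (fun t => t.card = 2)
    (fun t => finsetOrbit f t = finsetOrbit f s)).trans (Equiv.subtypeEquivRight fun t => ?_))
  rw [h.finsetOrbit_eq_iff hN s.2]
  exact ⟨And.right, fun ht => ⟨(h.card_of_mem_finsetOrbit ht).trans s.2, ht⟩⟩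

theorem nat_card_mem_finsetOrbit (h : IsRegularCyclic f N) (hN : Odd N)
    {s : Finset α} (hs : s.card = 2) (l : α) :
    Nat.card {t | t ∈ finsetOrbit f s ∧ l ∈ t} = 2 := by
  obtain ⟨x, y, hxy, rfl⟩ := Finset.card_eq_two.mp hs
  obtain ⟨i, ⟨hi, hx⟩, hxuniq⟩ := h x l
  obtain ⟨j, ⟨hj, hy⟩, hyuniq⟩ := h y l
  have hpair : {t | t ∈ finsetOrbit f {x, y} ∧ l ∈ t} =
      {Finset.image f^[i] {x, y}, Finset.image f^[j] {x, y}} := by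
    ext t
    simp only [Set.mem_ofPred_eq, Set.mem_insert_iff, Set.mem_singleton_iff]
    constructor
    · rintro ⟨⟨k, rfl⟩, hl⟩
      have hmod : Finset.image f^[k] {x, y} = Finset.image f^[k % N] {x, y} :=
        Finset.image_congr fun z _ => (h.iterate_mod z k).symm
      dsimp only at hl ⊢
      rw [hmod] at hl ⊢
      obtain ⟨z, hz, hzl⟩ := Finset.mem_image.1 hl
      obtain rfl | rfl : z = x ∨ z = y := by simpa using hz
      · exact .inl (by rw [hxuniq _ ⟨Nat.mod_lt _ hN.pos, hzl⟩])
      · exact .inr (by rw [hyuniq _ ⟨Nat.mod_lt _ hN.pos, hzl⟩])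
    · rintro (rfl | rfl)
      · exact ⟨⟨i, rfl⟩, Finset.mem_image.2 ⟨x, by simp, hx⟩⟩
      · exact ⟨⟨j, rfl⟩, Finset.mem_image.2 ⟨y, by simp, hy⟩⟩
  have hij : i ≠ j := fun hij => hxy (h.injective.iterate i (hx.trans (hij ▸ hy).symm))
  rw [Nat.card_coe_set_eq, hpair,
    Set.ncard_pair ((h.injOn_image_iterate_of_card_eq_two hN hs).ne hi hj hij)]

end IsRegularCyclic

theorem singer_orbits_on_bilines_general (F : Type*) [Field F]
    [DecidableEq (Projectivization F (Fin 3 → F))]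
    (q : ℕ)
    (act : Projectivization F (Fin 3 → F) → Projectivization F (Fin 3 → F))
    (hreg : ∀ l l' : Projectivization F (Fin 3 → F),
      ∃! k : ℕ, k < q ^ 2 + q + 1 ∧ act^[k] l = l') :
    Nat.card {b : Finset (Projectivization F (Fin 3 → F)) // b.card = 2} =
      q * (q + 1) * (q ^ 2 + q + 1) / 2 ∧
    (∀ b : Finset (Projectivization F (Fin 3 → F)), b.card = 2 →
      Nat.card {b' : Finset (Projectivization F (Fin 3 → F)) |
        ∃ k : ℕ, b.image (act^[k]) = b'} = q ^ 2 + q + 1) ∧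
    Nat.card (Set.range
      (fun b : {b : Finset (Projectivization F (Fin 3 → F)) // b.card = 2} =>
        {b' : Finset (Projectivization F (Fin 3 → F)) |
          ∃ k : ℕ, (b : Finset (Projectivization F (Fin 3 → F))).image (act^[k]) = b'})) =
      q * (q + 1) / 2 ∧
    (∀ b : Finset (Projectivization F (Fin 3 → F)), b.card = 2 →
      ∀ l : Projectivization F (Fin 3 → F),
        Nat.card {b' : Finset (Projectivization F (Fin 3 → F)) |
          (∃ k : ℕ, b.image (act^[k]) = b') ∧ l ∈ b'} = 2) := by
  have h : IsRegularCyclic act (q ^ 2 + q + 1) := hreg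
  obtain ⟨m, hm⟩ : ∃ m, q * (q + 1) = 2 * m := (Nat.even_mul_succ_self q).two_dvd
  have hN : Odd (q ^ 2 + q + 1) := ⟨m, by rw [← hm]; ring⟩
  have hbilines : Nat.card {b : Finset (Projectivization F (Fin 3 → F)) // b.card = 2} =
      m * (q ^ 2 + q + 1) := by
    rw [h.nat_card_finset_card_eq, Nat.choose_two_right, Nat.add_sub_cancel,
      show q ^ 2 + q = 2 * m by rw [← hm]; ring, mul_left_comm, Nat.mul_div_cancel_left _ two_pos,
      mul_comm]
  refine ⟨by rw [hbilines, hm, mul_assoc, Nat.mul_div_cancel_left _ two_pos],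
    fun b hb => h.nat_card_finsetOrbit hN hb, ?_, fun b hb => h.nat_card_mem_finsetOrbit hN hb⟩
  rw [hm, Nat.mul_div_cancel_left _ two_pos]
  exact Nat.eq_of_mul_eq_mul_right hN.pos (hbilines ▸ h.nat_card_range_finsetOrbit_mul hN)

/-- Under a Singer cyclic group `S` of PGL(3,q) — here generated by a single
projectivity `act` of the set of lines of PG(2,q) (lines being, by duality,
points of the projectivization of the dual space), given by a matrix
`M ∈ GL(3,q)` and acting regularly with the `q^2+q+1` iterates
`act^[0], …, act^[q^2+q]` — the `q(q+1)(q^2+q+1)/2` bi-lines of PG(2,q)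
split into exactly `q(q+1)/2` orbits, each of size `q^2+q+1`, and for each
orbit `b` every line of PG(2,q) is a component of exactly two bi-lines
of `b`. -/
theorem singer_orbits_on_bilines (F : Type*) [Field F] [Fintype F]
    [DecidableEq (Projectivization F (Fin 3 → F))]
    (q : ℕ) (hq : Fintype.card F = q)
    (M : GL (Fin 3) F)
    (act : Projectivization F (Fin 3 → F) → Projectivization F (Fin 3 → F))
    (hact : ∀ (v : Fin 3 → F) (hv : v ≠ 0) (hv' : M.val.mulVec v ≠ 0),
      act (Projectivization.mk F v hv) = Projectivization.mk F (M.val.mulVec v) hv')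
    (hreg : ∀ l l' : Projectivization F (Fin 3 → F),
      ∃! k : ℕ, k < q ^ 2 + q + 1 ∧ act^[k] l = l') :
    Nat.card {b : Finset (Projectivization F (Fin 3 → F)) // b.card = 2} =
      q * (q + 1) * (q ^ 2 + q + 1) / 2 ∧
    (∀ b : Finset (Projectivization F (Fin 3 → F)), b.card = 2 →
      Nat.card {b' : Finset (Projectivization F (Fin 3 → F)) |
        ∃ k : ℕ, b.image (act^[k]) = b'} = q ^ 2 + q + 1) ∧
    Nat.card (Set.range
      (fun b : {b : Finset (Projectivization F (Fin 3 → F)) // b.card = 2} =>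
        {b' : Finset (Projectivization F (Fin 3 → F)) |
          ∃ k : ℕ, (b : Finset (Projectivization F (Fin 3 → F))).image (act^[k]) = b'})) =
      q * (q + 1) / 2 ∧
    (∀ b : Finset (Projectivization F (Fin 3 → F)), b.card = 2 →
      ∀ l : Projectivization F (Fin 3 → F),
        Nat.card {b' : Finset (Projectivization F (Fin 3 → F)) |
          (∃ k : ℕ, b.image (act^[k]) = b') ∧ l ∈ b'} = 2) :=
  singer_orbits_on_bilines_general F q act hreg
end

section
/- Let S be a Singer cyclic group of PGL(3,q), let A1 and A2 be distinct points of PG(2,q), and let s be the unique element of S with A1^s = A2. Then the set of intersection points r ∩ r^s, as r ranges over the lines through A1, is a nondegenerate conic C of PG(2,q) passing through A1 and A2; moreover s maps the tangent line to C at A1 onto the line A1A2, and the line A1A2 onto the tangent line to C at A2. -/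
/-- A ternary quadratic form is degenerate if it factors into a product of
two linear forms over the algebraic closure. -/
def IsDegenerateBar (F : Type*) [Field F] (a : Fin 6 → F) : Prop :=
  ∃ u v : Fin 3 → AlgebraicClosure F, ∀ x : Fin 3 → AlgebraicClosure F,
    Qeval (fun i => algebraMap F (AlgebraicClosure F) (a i)) x =
      (∑ i, u i * x i) * (∑ i, v i * x i)

section

variable {F : Type*} [Field F]

/-- Incidence between a line (a point of the dual plane, with coefficient
vector `u`) and a point (with coordinate vector `w`) of PG(2,q). -/
def IncPL (l p : Projectivization F (Fin 3 → F)) : Prop :=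
  ∃ (u : Fin 3 → F) (hu : u ≠ 0) (w : Fin 3 → F) (hw : w ≠ 0),
    l = Projectivization.mk F u hu ∧ p = Projectivization.mk F w hw ∧
      ∑ i, u i * w i = 0

def VanishAt (a : Fin 6 → F) (p : Projectivization F (Fin 3 → F)) : Prop :=
  ∃ (w : Fin 3 → F) (hw : w ≠ 0), p = Projectivization.mk F w hw ∧
    Qeval a w = 0

end

open Matrix
open scoped LinearAlgebra.Projectivization

section Incidence

variable {K : Type*} [Field K]

theorem incPL_mk_iff {u w : Fin 3 → K} (hu : u ≠ 0) (hw : w ≠ 0) :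
    IncPL (Projectivization.mk K u hu) (Projectivization.mk K w hw) ↔ u ⬝ᵥ w = 0 := by
  refine ⟨fun ⟨u', hu', w', hw', hl, hp, h⟩ => ?_, fun h => ⟨u, hu, w, hw, rfl, rfl, h⟩⟩
  obtain ⟨a, rfl⟩ := (Projectivization.mk_eq_mk_iff' K _ _ hu hu').1 hl
  obtain ⟨b, rfl⟩ := (Projectivization.mk_eq_mk_iff' K _ _ hw hw').1 hp
  change u' ⬝ᵥ w' = 0 at h
  simp [smul_dotProduct, dotProduct_smul, h]

theorem qeval_smul {R : Type*} [CommRing R] (a : Fin 6 → R) (c : R) (x : Fin 3 → R) :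
    Qeval a (c • x) = c ^ 2 * Qeval a x := by
  simp only [Qeval, Pi.smul_apply, smul_eq_mul]
  ring

theorem vanishAt_mk_iff (a : Fin 6 → K) {w : Fin 3 → K} (hw : w ≠ 0) :
    VanishAt a (Projectivization.mk K w hw) ↔ Qeval a w = 0 := by
  refine ⟨fun ⟨w', hw', hp, h⟩ => ?_, fun h => ⟨w, hw, rfl, h⟩⟩
  obtain ⟨c, rfl⟩ := (Projectivization.mk_eq_mk_iff' K _ _ hw hw').1 hp
  simp [qeval_smul, h]

theorem mk_eq_mk_iff_crossProduct_eq_zero {u v : Fin 3 → K} (hu : u ≠ 0) (hv : v ≠ 0) :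
    Projectivization.mk K u hu = Projectivization.mk K v hv ↔ u ⨯₃ v = 0 := by
  rw [← not_iff_not, ← ne_eq (crossProduct u v), crossProduct_ne_zero_iff_linearIndependent,
    LinearIndependent.pair_iff' hu, eq_comm, Projectivization.mk_eq_mk_iff' K _ _ hv hu]
  simp only [not_exists, ne_eq]

theorem IncPL.eq_of_ne {l l' p p' : ℙ K (Fin 3 → K)} (hlp : IncPL l p) (hlp' : IncPL l p')
    (hl'p : IncPL l' p) (hl'p' : IncPL l' p') (hpp' : p ≠ p') : l = l' := by
  induction l using Projectivization.ind with | h u hu => ?_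
  induction l' using Projectivization.ind with | h u' hu' => ?_
  induction p using Projectivization.ind with | h x hx => ?_
  induction p' using Projectivization.ind with | h x' hx' => ?_
  rw [incPL_mk_iff] at hlp hlp' hl'p hl'p'
  have hxx' : x ⨯₃ x' ≠ 0 := by rwa [Ne, ← mk_eq_mk_iff_crossProduct_eq_zero hx hx']
  -- both lines are the point `x ⨯₃ x'` of the dual plane
  have key : ∀ v (hv : v ≠ 0), v ⬝ᵥ x = 0 → v ⬝ᵥ x' = 0 →
      Projectivization.mk K v hv = Projectivization.mk K _ hxx' := by
    intro v hv h h'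
    rw [mk_eq_mk_iff_crossProduct_eq_zero, cross_cross_eq_smul_sub_smul', dotProduct_comm x, h, h']
    simp
  rw [key u hu hlp hlp', key u' hu' hl'p hl'p']

theorem exists_incPL_incPL (l l' : ℙ K (Fin 3 → K)) : ∃ p, IncPL l p ∧ IncPL l' p := by
  induction l using Projectivization.ind with | h u hu => ?_
  induction l' using Projectivization.ind with | h u' hu' => ?_
  obtain ⟨x, hx, hux⟩ := exists_mulVec_eq_zero_iff.2
    (det_zero_of_row_eq (M := of ![u, u', u']) (i := 1) (j := 2) (by decide) rfl)
  refine ⟨Projectivization.mk K x hx, ?_⟩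
  simpa [incPL_mk_iff] using hux

theorem exists_not_incPL (l : ℙ K (Fin 3 → K)) : ∃ p, ¬ IncPL l p := by
  induction l using Projectivization.ind with | h u hu => ?_
  obtain ⟨i, hi⟩ := Function.ne_iff.1 hu
  refine ⟨Projectivization.mk K (Pi.single i 1) (by simp), ?_⟩
  simpa [incPL_mk_iff, dotProduct_single] using hi

theorem det_eq_zero_iff_exists_incPL {x y z : Fin 3 → K} (hx : x ≠ 0) (hy : y ≠ 0) (hz : z ≠ 0) :
    (of ![x, y, z]).det = 0 ↔ ∃ l, IncPL l (Projectivization.mk K x hx) ∧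
      IncPL l (Projectivization.mk K y hy) ∧ IncPL l (Projectivization.mk K z hz) := by
  rw [← exists_mulVec_eq_zero_iff]
  constructor
  · rintro ⟨u, hu, h⟩
    refine ⟨Projectivization.mk K u hu, ?_⟩
    simpa [incPL_mk_iff, dotProduct_comm u] using h
  · rintro ⟨l, h⟩
    induction l using Projectivization.ind with | h u hu => ?_
    exact ⟨u, hu, by simpa [incPL_mk_iff, dotProduct_comm u] using h⟩

end Incidence

section Collineation

variable {K : Type*} [Field K]

theorem mulVec_ne_zero_of_isUnit {A : Matrix (Fin 3) (Fin 3) K} (hA : IsUnit A)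
    {v : Fin 3 → K} (hv : v ≠ 0) : A *ᵥ v ≠ 0 :=
  (mulVec_injective_of_isUnit hA).ne hv |>.trans_eq (mulVec_zero A)

def pointMap (M : GL (Fin 3) K) : ℙ K (Fin 3 → K) → ℙ K (Fin 3 → K) :=
  Projectivization.map M.val.mulVecLin
    (mulVec_injective_of_isUnit M.isUnit)

def lineMap (M : GL (Fin 3) K) : ℙ K (Fin 3 → K) → ℙ K (Fin 3 → K) :=
  Projectivization.map (M⁻¹ : GL (Fin 3) K).val.transpose.mulVecLin
    (mulVec_injective_of_isUnit ((isUnit_transpose _).2 (M⁻¹).isUnit))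

@[simp]
theorem pointMap_mk (M : GL (Fin 3) K) {v : Fin 3 → K} (hv : v ≠ 0) :
    pointMap M (Projectivization.mk K v hv) =
      Projectivization.mk K (M.val *ᵥ v)
        (mulVec_ne_zero_of_isUnit M.isUnit hv) :=
  Projectivization.map_mk _ _ v hv

@[simp]
theorem lineMap_mk (M : GL (Fin 3) K) {u : Fin 3 → K} (hu : u ≠ 0) :
    lineMap M (Projectivization.mk K u hu) =
      Projectivization.mk K ((M⁻¹ : GL (Fin 3) K).val.transpose *ᵥ u)
        (mulVec_ne_zero_of_isUnit ((isUnit_transpose _).2 (M⁻¹).isUnit) hu) :=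
  Projectivization.map_mk _ _ u hu

@[simp]
theorem pointMap_inv_pointMap (M : GL (Fin 3) K) (p : ℙ K (Fin 3 → K)) :
    pointMap M⁻¹ (pointMap M p) = p := by
  induction p using Projectivization.ind with | h v hv => ?_
  simp [mulVec_mulVec]

@[simp]
theorem pointMap_pointMap_inv (M : GL (Fin 3) K) (p : ℙ K (Fin 3 → K)) :
    pointMap M (pointMap M⁻¹ p) = p := by
  simpa using pointMap_inv_pointMap M⁻¹ p

theorem lineMap_injective (M : GL (Fin 3) K) : Function.Injective (lineMap M) :=
  Projectivization.map_injective _ _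

theorem incPL_lineMap_iff (M : GL (Fin 3) K) (l p : ℙ K (Fin 3 → K)) :
    IncPL (lineMap M l) p ↔ IncPL l (pointMap M⁻¹ p) := by
  induction l using Projectivization.ind with | h u hu => ?_
  induction p using Projectivization.ind with | h x hx => ?_
  simp only [lineMap_mk, pointMap_mk, incPL_mk_iff, mulVec_transpose, dotProduct_mulVec]

@[simp]
theorem incPL_lineMap_pointMap_iff (M : GL (Fin 3) K) (l p : ℙ K (Fin 3 → K)) :
    IncPL (lineMap M l) (pointMap M p) ↔ IncPL l p := by
  rw [incPL_lineMap_iff, pointMap_inv_pointMap]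

end Collineation

section Singer

variable {K : Type*} [Field K] {M : GL (Fin 3) K}

def PointTransitive (M : GL (Fin 3) K) : Prop :=
  ∀ p p' : ℙ K (Fin 3 → K), ∃ k, (pointMap M)^[k] p = p'

theorem PointTransitive.inv (htrans : PointTransitive M) : PointTransitive M⁻¹ := by
  intro p p'
  obtain ⟨k, rfl⟩ := htrans p' p
  exact ⟨k, (Function.LeftInverse.iterate (pointMap_inv_pointMap M) k) p'⟩

theorem forall_mem_of_mapsTo_pointMap (htrans : PointTransitive M)
    {S : Set (ℙ K (Fin 3 → K))} (hS : Set.MapsTo (pointMap M) S S) {p : ℙ K (Fin 3 → K)}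
    (hp : p ∈ S) (p' : ℙ K (Fin 3 → K)) : p' ∈ S := by
  obtain ⟨k, rfl⟩ := htrans p p'
  exact hS.iterate k hp

theorem pointMap_ne_self (htrans : PointTransitive M) (p : ℙ K (Fin 3 → K)) :
    pointMap M p ≠ p := by
  intro hfix
  have hS : Set.MapsTo (pointMap M) {p} {p} := by
    rintro _ rfl
    exact hfix
  have h0 := forall_mem_of_mapsTo_pointMap htrans hS rfl
    (Projectivization.mk K (Pi.single 0 1) (by simp))
  have h1 := forall_mem_of_mapsTo_pointMap htrans hS rfl
    (Projectivization.mk K (Pi.single 1 1) (by simp))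
  rw [Set.mem_singleton_iff] at h0 h1
  have := (mk_eq_mk_iff_crossProduct_eq_zero _ _).1 (h0.trans h1.symm)
  simpa [cross_apply] using congrFun this 2

theorem lineMap_ne_self (htrans : PointTransitive M) (l : ℙ K (Fin 3 → K)) :
    lineMap M l ≠ l := by
  intro hfix
  have hS : Set.MapsTo (pointMap M) {p | IncPL l p} {p | IncPL l p} := fun p hp => by
    rw [Set.mem_ofPred_eq, ← hfix]
    exact (incPL_lineMap_pointMap_iff M l p).2 hp
  obtain ⟨p, hp, -⟩ := exists_incPL_incPL l l
  obtain ⟨p', hp'⟩ := exists_not_incPL l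
  exact hp' (forall_mem_of_mapsTo_pointMap htrans hS hp p')

theorem not_collinear_pointMap (htrans : PointTransitive M) (p : ℙ K (Fin 3 → K)) :
    ¬ ∃ l, IncPL l p ∧ IncPL l (pointMap M p) ∧ IncPL l (pointMap M (pointMap M p)) := by
  rintro ⟨l, hp, hp₁, hp₂⟩
  have hl₁ := (incPL_lineMap_pointMap_iff M l p).2 hp
  have hl₂ := (incPL_lineMap_pointMap_iff M l _).2 hp₁
  exact lineMap_ne_self htrans l
    (IncPL.eq_of_ne hl₁ hl₂ hp₁ hp₂ (pointMap_ne_self htrans (pointMap M p)).symm)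

theorem det_orbit_ne_zero (htrans : PointTransitive M) {w : Fin 3 → K} (hw : w ≠ 0) :
    (of ![w, M.val *ᵥ w, M.val *ᵥ M.val *ᵥ w]).det ≠ 0 := by
  have hMw := mulVec_ne_zero_of_isUnit M.isUnit hw
  rw [Ne, det_eq_zero_iff_exists_incPL hw hMw (mulVec_ne_zero_of_isUnit M.isUnit hMw)]
  simpa only [pointMap_mk] using not_collinear_pointMap htrans (Projectivization.mk K w hw)

end Singer

section Conic

/-- The coefficients, in the encoding of `Qeval`, of the quadratic form
`x ↦ det ![w, x, N x] = x ⬝ᵥ (N x ⨯₃ w)`, whose Gram matrix has entries `(Nᵀ j ⨯₃ w) i`. -/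
def detForm {R : Type*} [CommRing R] (w : Fin 3 → R) (N : Matrix (Fin 3) (Fin 3) R) :
    Fin 6 → R :=
  let B : Matrix (Fin 3) (Fin 3) R := of fun i j => (Nᵀ j ⨯₃ w) i
  ![B 0 0, B 1 1, B 2 2, B 0 1 + B 1 0, B 0 2 + B 2 0, B 1 2 + B 2 1]

theorem qeval_detForm {R : Type*} [CommRing R] (w x : Fin 3 → R) (N : Matrix (Fin 3) (Fin 3) R) :
    Qeval (detForm w N) x = (of ![w, x, N *ᵥ x]).det := by
  simp only [Qeval, detForm, det_fin_three, cross_apply, transpose_apply, of_apply, cons_val',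
    cons_val_zero, cons_val_one, cons_val, cons_val_fin_one, mulVec, dotProduct,
    Fin.sum_univ_three]
  ring

theorem detForm_map {R S : Type*} [CommRing R] [CommRing S] (f : R →+* S) (w : Fin 3 → R)
    (N : Matrix (Fin 3) (Fin 3) R) :
    (fun i => f (detForm w N i)) = detForm (f ∘ w) (N.map f) := by
  funext i
  fin_cases i <;> simp [detForm, cross_apply]

theorem det_eq_zero_of_forall_det_eq_mul {R : Type*} [CommRing R] [NoZeroDivisors R]
    (w u v : Fin 3 → R) (N : Matrix (Fin 3) (Fin 3) R)
    (h : ∀ x, (of ![w, x, N *ᵥ x]).det = (u ⬝ᵥ x) * (v ⬝ᵥ x)) :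
    (of ![w, N *ᵥ w, N *ᵥ N *ᵥ w]).det = 0 := by
  wlog huw : u ⬝ᵥ w = 0 generalizing u v
  · have hw : (u ⬝ᵥ w) * (v ⬝ᵥ w) = 0 := by
      rw [← h w]
      exact det_zero_of_row_eq (i := 0) (j := 1) (by decide) rfl
    exact this v u (fun x => by rw [h, mul_comm]) ((mul_eq_zero.1 hw).resolve_left huw)
  set D := (of ![w, N *ᵥ w, N *ᵥ N *ᵥ w]).det
  -- `y` lies on the line `u ⬝ᵥ x = 0` together with `w`, so the form vanishes at `y` and
  -- at `w + y`; polarizing gives `(u ⬝ᵥ N w) * D = 0`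
  set y := (u ⬝ᵥ N *ᵥ N *ᵥ w) • N *ᵥ w - (u ⬝ᵥ N *ᵥ w) • N *ᵥ N *ᵥ w
  have huy : u ⬝ᵥ y = 0 := by
    simp only [y, dotProduct_sub, dotProduct_smul, smul_eq_mul]
    ring
  have hy := h y
  have hwy := h (w + y)
  rw [huy, zero_mul] at hy
  rw [dotProduct_add, huw, huy, add_zero, zero_mul] at hwy
  have hpolar : (of ![w, w + y, N *ᵥ (w + y)]).det - (of ![w, y, N *ᵥ y]).det =
      (u ⬝ᵥ N *ᵥ w) * D := by
    simp only [y, D, det_fin_three, mulVec_add, mulVec_sub, mulVec_smul, of_apply, cons_val',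
      cons_val_zero, cons_val_one, cons_val, cons_val_fin_one, Pi.add_apply, Pi.sub_apply,
      Pi.smul_apply, smul_eq_mul]
    ring
  rw [hwy, hy, sub_zero, eq_comm, mul_eq_zero] at hpolar
  rcases hpolar with hu | hD
  · rw [show D = _ from h (N *ᵥ w), hu, zero_mul]
  · exact hD

theorem not_isDegenerateBar_detForm {F : Type*} [Field F] (w : Fin 3 → F)
    (N : Matrix (Fin 3) (Fin 3) F) (hD : (of ![w, N *ᵥ w, N *ᵥ N *ᵥ w]).det ≠ 0) :
    ¬ IsDegenerateBar F (detForm w N) := by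
  rintro ⟨u, v, huv⟩
  set f := algebraMap F (AlgebraicClosure F)
  rw [detForm_map f] at huv
  have hD' := det_eq_zero_of_forall_det_eq_mul (f ∘ w) u v (N.map f)
    fun x => by rw [← qeval_detForm]; exact huv x
  apply hD
  apply f.injective
  rw [map_zero, ← hD', RingHom.map_det]
  congr 1
  ext i j
  fin_cases i <;> simp [RingHom.map_mulVec]

end Conic

section SteinerLocus

variable {K : Type*} [Field K]

def steinerLocus (M : GL (Fin 3) K) (A : ℙ K (Fin 3 → K)) : Set (ℙ K (Fin 3 → K)) :=
  {p | ∃ r, IncPL r A ∧ IncPL r p ∧ IncPL (lineMap M r) p}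

theorem mem_steinerLocus_iff (M : GL (Fin 3) K) {w : Fin 3 → K} (hw : w ≠ 0)
    (p : ℙ K (Fin 3 → K)) :
    p ∈ steinerLocus M (Projectivization.mk K w hw) ↔
      VanishAt (detForm w (M⁻¹ : GL (Fin 3) K).val) p := by
  induction p using Projectivization.ind with | h x hx => ?_
  rw [vanishAt_mk_iff, qeval_detForm,
    det_eq_zero_iff_exists_incPL hw hx (mulVec_ne_zero_of_isUnit (M⁻¹).isUnit hx)]
  simp only [steinerLocus, Set.mem_ofPred_eq, incPL_lineMap_iff, pointMap_mk]

variable {M : GL (Fin 3) K} {A : ℙ K (Fin 3 → K)} {l : ℙ K (Fin 3 → K)}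

theorem lineMap_eq_of_tangent (htrans : PointTransitive M)
    (hlA : IncPL l A) (hlB : IncPL l (pointMap M A)) {t : ℙ K (Fin 3 → K)} (htA : IncPL t A)
    (htan : ∀ p, IncPL t p → p ∈ steinerLocus M A → p = A) : lineMap M t = l := by
  obtain ⟨p, htp, hsp⟩ := exists_incPL_incPL t (lineMap M t)
  obtain rfl : p = A := htan p htp ⟨t, htA, htp, hsp⟩
  exact IncPL.eq_of_ne hsp ((incPL_lineMap_pointMap_iff M t p).2 htA) hlA hlB
    (pointMap_ne_self htrans p).symm

theorem eq_pointMap_of_incPL_lineMap (htrans : PointTransitive M)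
    (hlA : IncPL l A) (hlB : IncPL l (pointMap M A)) {p : ℙ K (Fin 3 → K)}
    (hp : IncPL (lineMap M l) p) (hpC : p ∈ steinerLocus M A) : p = pointMap M A := by
  obtain ⟨r, hrA, hrp, hsrp⟩ := hpC
  by_contra hne
  have hsl := (incPL_lineMap_pointMap_iff M l A).2 hlA
  have hsr := (incPL_lineMap_pointMap_iff M r A).2 hrA
  obtain rfl : r = l := lineMap_injective M (IncPL.eq_of_ne hsrp hsr hp hsl hne)
  exact lineMap_ne_self htrans r (IncPL.eq_of_ne hp hsl hrp hlB hne)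

end SteinerLocus

theorem steiner_conic_from_singer_general (F : Type*) [Field F]
    (q : ℕ)
    (M : GL (Fin 3) F)
    (act actL : Projectivization F (Fin 3 → F) → Projectivization F (Fin 3 → F))
    (hact : ∀ (v : Fin 3 → F) (hv : v ≠ 0) (hv' : M.val.mulVec v ≠ 0),
      act (Projectivization.mk F v hv) = Projectivization.mk F (M.val.mulVec v) hv')
    (hactL : ∀ (u : Fin 3 → F) (hu : u ≠ 0)
      (hu' : ((M⁻¹ : GL (Fin 3) F).val.transpose).mulVec u ≠ 0),
      actL (Projectivization.mk F u hu) =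
        Projectivization.mk F (((M⁻¹ : GL (Fin 3) F).val.transpose).mulVec u) hu')
    (hreg : ∀ p p' : Projectivization F (Fin 3 → F),
      ∃! k : ℕ, k < q ^ 2 + q + 1 ∧ act^[k] p = p')
    (A1 A2 : Projectivization F (Fin 3 → F))
    (hs : act A1 = A2) :
    ∃ a : Fin 6 → F, a ≠ 0 ∧ ¬ IsDegenerateBar F a ∧
      VanishAt a A1 ∧ VanishAt a A2 ∧
      (∀ p : Projectivization F (Fin 3 → F),
        VanishAt a p ↔ ∃ r, IncPL r A1 ∧ IncPL r p ∧ IncPL (actL r) p) ∧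
      (∀ l : Projectivization F (Fin 3 → F), IncPL l A1 → IncPL l A2 →
        (∀ t : Projectivization F (Fin 3 → F), IncPL t A1 →
          (∀ p, IncPL t p → VanishAt a p → p = A1) → actL t = l) ∧
        IncPL (actL l) A2 ∧
        ∀ p, IncPL (actL l) p → VanishAt a p → p = A2) := by
  obtain rfl : act = pointMap M := funext <| Projectivization.ind fun v hv => by
    rw [hact v hv (mulVec_ne_zero_of_isUnit M.isUnit hv), pointMap_mk]
  obtain rfl : actL = lineMap M := funext <| Projectivization.ind fun u hu => by
    rw [hactL u hu (mulVec_ne_zero_of_isUnit ((isUnit_transpose _).2 (M⁻¹).isUnit) hu),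
      lineMap_mk]
  have htrans : PointTransitive M := fun p p' => (hreg p p').exists.imp fun _ => And.right
  induction A1 using Projectivization.ind with | h w hw => ?_
  subst hs
  have hD := det_orbit_ne_zero htrans.inv hw
  have hC := mem_steinerLocus_iff M hw
  refine ⟨detForm w (M⁻¹ : GL (Fin 3) F).val, fun h => hD ?_, not_isDegenerateBar_detForm _ _ hD,
    ?_, ?_, fun p => (hC p).symm, fun l hlA hlB => ⟨fun t htA htan => ?_,
    (incPL_lineMap_pointMap_iff M l _).2 hlA, fun p hp hpC => ?_⟩⟩
  · rw [← qeval_detForm, h]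
    simp [Qeval]
  · rw [vanishAt_mk_iff, qeval_detForm]
    exact det_zero_of_row_eq (i := 0) (j := 1) (by decide) rfl
  · rw [pointMap_mk, vanishAt_mk_iff, qeval_detForm, mulVec_mulVec, ← Units.val_mul,
      inv_mul_cancel, Units.val_one, one_mulVec]
    exact det_zero_of_row_eq (i := 0) (j := 2) (by decide) rfl
  · exact lineMap_eq_of_tangent htrans hlA hlB htA fun p hp hpC => htan p hp ((hC p).1 hpC)
  · exact eq_pointMap_of_incPL_lineMap htrans hlA hlB hp ((hC p).2 hpC)

/-- Steiner's conic from a Singer cycle.  Let `s` be the unique element of a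
Singer cyclic group of PGL(3,q) (generated by the projectivity `act`, given
by a matrix `M`, regular on points; `actL`, given by the inverse-transpose
matrix, is its action on lines) with `A1^s = A2`, where `A1 ≠ A2`.  Then the
set of intersection points `r ∩ r^s`, as `r` ranges over the lines through
`A1`, is a nondegenerate conic `C` through `A1` and `A2`; moreover `s` maps
the tangent line to `C` at `A1` onto the line `A1A2`, and the line `A1A2`
onto the tangent line to `C` at `A2`. -/
theorem steiner_conic_from_singer (F : Type*) [Field F] [Fintype F]
    (q : ℕ) (hq : Fintype.card F = q)
    (M : GL (Fin 3) F)
    (act actL : Projectivization F (Fin 3 → F) → Projectivization F (Fin 3 → F))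
    (hact : ∀ (v : Fin 3 → F) (hv : v ≠ 0) (hv' : M.val.mulVec v ≠ 0),
      act (Projectivization.mk F v hv) = Projectivization.mk F (M.val.mulVec v) hv')
    (hactL : ∀ (u : Fin 3 → F) (hu : u ≠ 0)
      (hu' : ((M⁻¹ : GL (Fin 3) F).val.transpose).mulVec u ≠ 0),
      actL (Projectivization.mk F u hu) =
        Projectivization.mk F (((M⁻¹ : GL (Fin 3) F).val.transpose).mulVec u) hu')
    (hreg : ∀ p p' : Projectivization F (Fin 3 → F),
      ∃! k : ℕ, k < q ^ 2 + q + 1 ∧ act^[k] p = p')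
    (A1 A2 : Projectivization F (Fin 3 → F)) (hA : A1 ≠ A2)
    (hs : act A1 = A2) :
    ∃ a : Fin 6 → F, a ≠ 0 ∧ ¬ IsDegenerateBar F a ∧
      VanishAt a A1 ∧ VanishAt a A2 ∧
      (∀ p : Projectivization F (Fin 3 → F),
        VanishAt a p ↔ ∃ r, IncPL r A1 ∧ IncPL r p ∧ IncPL (actL r) p) ∧
      (∀ l : Projectivization F (Fin 3 → F), IncPL l A1 → IncPL l A2 →
        (∀ t : Projectivization F (Fin 3 → F), IncPL t A1 →
          (∀ p, IncPL t p → VanishAt a p → p = A1) → actL t = l) ∧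
        IncPL (actL l) A2 ∧
        ∀ p, IncPL (actL l) p → VanishAt a p → p = A2) :=
  steiner_conic_from_singer_general F q M act actL hact hactL hreg A1 A2 hs
end
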